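/- arXiv:2209.15357 — 5 statements merged into one kernel-verified Lean document; each statement's English description precedes it below -/
import Mathlib

section
/- Let x, a : ℕ → ℝ be such that x is summable and q ↦ a(q)² is summable. Then for every m ∈ ℕ, the family indexed by multiindices n with |n| = m whose term is (m!/n!) · Π_{q ≥ 0} H_{n_q}(x(q); a(q)²) (all but finitely many factors equal H_0 = 1) is summable, and its sum equals H_m(Σ_{q ≥ 0} x(q); Σ_{q ≥ 0} a(q)²). -/
/-- The Hermite polynomial `H_m(·; C)` with variance `C`, defined recursively by
`H_0(x; C) = 1` and `H_{m+1}(x; C) = x·H_m(x; C) − C·(d/dx)H_m(x; C)`. -/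
noncomputable def hermitePoly (C : ℝ) : ℕ → Polynomial ℝ
  | 0 => 1
  | m + 1 => Polynomial.X * hermitePoly C m - C • Polynomial.derivative (hermitePoly C m)

/-- `H m x C = H_m(x; C)`, the Hermite polynomial with variance `C` evaluated at `x`. -/
noncomputable def H (m : ℕ) (x C : ℝ) : ℝ := (hermitePoly C m).eval x

open Polynomial Finset

lemma hermitePoly_succ (C : ℝ) (m : ℕ) :
    hermitePoly C (m+1) = X * hermitePoly C m - C • derivative (hermitePoly C m) := rfl

lemma hermitePoly_derivative (C : ℝ) (m : ℕ) :
    derivative (hermitePoly C (m+1)) = ((m : ℝ) + 1) • hermitePoly C m := by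
  induction m with
  | zero => simp [hermitePoly]
  | succ m ih =>
      rw [hermitePoly_succ]
      simp only [derivative_sub, derivative_mul, derivative_X, derivative_smul, ih]
      rw [hermitePoly_succ C m]
      simp only [smul_eq_C_mul, map_add, map_one, map_ofNat]
      push_cast
      simp only [map_add, map_one]
      ring

lemma H_zero (x C : ℝ) : H 0 x C = 1 := by simp [H, hermitePoly]

lemma H_one (x C : ℝ) : H 1 x C = x := by simp [H, hermitePoly]

lemma H_rec (x C : ℝ) (m : ℕ) :
    H (m+2) x C = x * H (m+1) x C - C * ((m : ℝ)+1) * H m x C := by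
  simp only [H, hermitePoly_succ C (m+1), hermitePoly_derivative, eval_sub, eval_mul, eval_X,
    eval_smul, smul_eq_mul]
  ring

/-- recursion valid for all k with truncated subtraction -/
lemma H_mul_x (x C : ℝ) (k : ℕ) :
    x * H k x C = H (k+1) x C + C * (k : ℝ) * H (k-1) x C := by
  cases k with
  | zero => simp [H_zero, H_one]
  | succ k => rw [H_rec]; push_cast; ring_nf

lemma S_rec (u c v d : ℝ) (n : ℕ) :
    (u + v) * (∑ k ∈ range (n+1+1), ((n+1).choose k : ℝ) * H k u c * H (n+1-k) v d)
      - (c + d) * ((n:ℝ)+1) * (∑ k ∈ range (n+1), (n.choose k : ℝ) * H k u c * H (n-k) v d)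
    = ∑ k ∈ range (n+2+1), ((n+2).choose k : ℝ) * H k u c * H (n+2-k) v d := by
  have e1 : (u + v) * (∑ k ∈ range (n+1+1), ((n+1).choose k : ℝ) * H k u c * H (n+1-k) v d)
      = (∑ k ∈ range (n+2), ((n+1).choose k : ℝ) * (u * H k u c) * H (n+1-k) v d)
      + (∑ k ∈ range (n+2), ((n+1).choose k : ℝ) * H k u c * (v * H (n+1-k) v d)) := by
    rw [add_mul, Finset.mul_sum, Finset.mul_sum]
    congr 1 <;> exact sum_congr rfl fun k _ => by ring
  have e2 : (∑ k ∈ range (n+2), ((n+1).choose k : ℝ) * (u * H k u c) * H (n+1-k) v d)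
      = (∑ k ∈ range (n+2), ((n+1).choose k : ℝ) * H (k+1) u c * H (n+1-k) v d)
      + c * ∑ k ∈ range (n+2), ((n+1).choose k : ℝ) * (k:ℝ) * H (k-1) u c * H (n+1-k) v d := by
    rw [Finset.mul_sum, ← sum_add_distrib]
    refine sum_congr rfl fun k _ => ?_
    rw [H_mul_x]; ring
  have e3 : (∑ k ∈ range (n+2), ((n+1).choose k : ℝ) * H k u c * (v * H (n+1-k) v d))
      = (∑ k ∈ range (n+2), ((n+1).choose k : ℝ) * H k u c * H (n+2-k) v d)
      + d * ∑ k ∈ range (n+2), ((n+1).choose k : ℝ) * ((n+1-k : ℕ):ℝ) * H k u c * H (n-k) v d := by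
    rw [Finset.mul_sum, ← sum_add_distrib]
    refine sum_congr rfl fun k hk => ?_
    have hk' : k ≤ n+1 := by simpa [Nat.lt_succ_iff] using mem_range.1 hk
    rw [H_mul_x, show n+1-k+1 = n+2-k by omega, show n+1-k-1 = n-k by omega]
    ring
  have e4 : (∑ k ∈ range (n+2), ((n+1).choose k : ℝ) * (k:ℝ) * H (k-1) u c * H (n+1-k) v d)
      = ((n:ℝ)+1) * ∑ k ∈ range (n+1), (n.choose k : ℝ) * H k u c * H (n-k) v d := by
    rw [Finset.sum_range_succ', Finset.mul_sum]
    simp only [Nat.cast_zero, mul_zero, zero_mul, add_zero, Nat.succ_sub_succ, Nat.sub_zero,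
      Nat.add_sub_cancel]
    refine sum_congr rfl fun k _ => ?_
    have h : ((n+1).choose (k+1) : ℝ) * ((k:ℝ)+1) = ((n:ℝ)+1) * (n.choose k : ℝ) := by
      exact_mod_cast congrArg (Nat.cast (R := ℝ)) (Nat.add_one_mul_choose_eq n k).symm
    push_cast
    linear_combination (H k u c * H (n - k) v d) * h
  have e5 : (∑ k ∈ range (n+2), ((n+1).choose k : ℝ) * ((n+1-k : ℕ):ℝ) * H k u c * H (n-k) v d)
      = ((n:ℝ)+1) * ∑ k ∈ range (n+1), (n.choose k : ℝ) * H k u c * H (n-k) v d := by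
    rw [Finset.sum_range_succ, Finset.mul_sum]
    simp only [Nat.sub_self, Nat.cast_zero, mul_zero, zero_mul, add_zero]
    refine sum_congr rfl fun k hk => ?_
    have hk' : k ≤ n := by simpa [Nat.lt_succ_iff] using mem_range.1 hk
    have h : ((n+1).choose k : ℝ) * ((n+1-k : ℕ):ℝ) = ((n:ℝ)+1) * (n.choose k : ℝ) := by
      have h2 : ((n.choose k * (n+1) : ℕ) : ℝ) = (((n+1).choose k * (n+1-k) : ℕ) : ℝ) :=
        congrArg _ (Nat.choose_mul_succ_eq n k)
      push_cast at h2
      linarith [h2]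
    linear_combination (H k u c * H (n - k) v d) * h
  have e6 : (∑ k ∈ range (n+2+1), ((n+2).choose k : ℝ) * H k u c * H (n+2-k) v d)
      = (∑ k ∈ range (n+2), ((n+1).choose k : ℝ) * H (k+1) u c * H (n+1-k) v d)
      + (∑ k ∈ range (n+2), ((n+1).choose k : ℝ) * H k u c * H (n+2-k) v d) := by
    rw [Finset.sum_range_succ' _ (n+2)]
    have pascal : ∀ k ∈ range (n+2),
        ((n+2).choose (k+1) : ℝ) * H (k+1) u c * H (n+2-(k+1)) v d
          = ((n+1).choose k : ℝ) * H (k+1) u c * H (n+1-k) v d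
          + ((n+1).choose (k+1) : ℝ) * H (k+1) u c * H (n+1-k) v d := by
      intro k _
      have : ((n+2).choose (k+1) : ℝ) = ((n+1).choose k : ℝ) + ((n+1).choose (k+1) : ℝ) := by
        rw [Nat.choose_succ_succ (n+1) k]; push_cast; ring
      rw [Nat.succ_sub_succ, this]; ring
    rw [sum_congr rfl pascal, sum_add_distrib, add_assoc]
    congr 1
    simp only [Nat.choose_zero_right, Nat.cast_one, one_mul, Nat.sub_zero]
    have h2 := Finset.sum_range_succ'
      (fun k => ((n+1).choose k : ℝ) * H k u c * H (n+2-k) v d) (n+2)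
    rw [Finset.sum_range_succ] at h2
    have hz : (n+1).choose (n+2) = 0 := Nat.choose_eq_zero_of_lt (by omega)
    simp only [hz, Nat.cast_zero, zero_mul, add_zero, Nat.succ_sub_succ, Nat.choose_zero_right,
      Nat.cast_one, one_mul, Nat.sub_zero] at h2
    exact h2.symm
  calc (u + v) * (∑ k ∈ range (n+1+1), ((n+1).choose k : ℝ) * H k u c * H (n+1-k) v d)
      - (c + d) * ((n:ℝ)+1) * (∑ k ∈ range (n+1), (n.choose k : ℝ) * H k u c * H (n-k) v d)
      = (∑ k ∈ range (n+2), ((n+1).choose k : ℝ) * H (k+1) u c * H (n+1-k) v d)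
      + (∑ k ∈ range (n+2), ((n+1).choose k : ℝ) * H k u c * H (n+2-k) v d)
      + (c * (((n:ℝ)+1) * ∑ k ∈ range (n+1), (n.choose k : ℝ) * H k u c * H (n-k) v d)
        + d * (((n:ℝ)+1) * ∑ k ∈ range (n+1), (n.choose k : ℝ) * H k u c * H (n-k) v d))
      - (c + d) * ((n:ℝ)+1) * (∑ k ∈ range (n+1), (n.choose k : ℝ) * H k u c * H (n-k) v d) := by
        rw [e1, e2, e3, e4, e5]; ring
    _ = ∑ k ∈ range (n+2+1), ((n+2).choose k : ℝ) * H k u c * H (n+2-k) v d := by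
        rw [e6]; ring

lemma H_add (u c v d : ℝ) (n : ℕ) :
    H n (u+v) (c+d) = ∑ k ∈ range (n+1), (n.choose k : ℝ) * H k u c * H (n-k) v d := by
  induction n using Nat.twoStepInduction with
  | zero => simp [H_zero]
  | one => simp [Finset.sum_range_succ, H_one, H_zero]; ring
  | more n ih ih1 =>
    rw [H_rec, ih, ih1]
    exact S_rec u c v d n

lemma H_add' (u c v d : ℝ) (n : ℕ) :
    H n (u+v) (c+d) = ∑ p ∈ Finset.HasAntidiagonal.antidiagonal n,
      (n.choose p.1 : ℝ) * H p.1 u c * H p.2 v d := by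
  rw [Finset.Nat.sum_antidiagonal_eq_sum_range_succ_mk, H_add]

lemma H_zero_zero (m : ℕ) : H m 0 0 = if m = 0 then 1 else 0 := by
  match m with
  | 0 => simp [H_zero]
  | 1 => simp [H_one]
  | (k+2) => rw [H_rec]; simp

lemma H_multinomial_finset (x C : ℕ → ℝ) (s : Finset ℕ) (m : ℕ) :
    H m (∑ q ∈ s, x q) (∑ q ∈ s, C q)
      = ∑ k ∈ Finset.piAntidiag s m,
          (Nat.multinomial s k : ℝ) * ∏ q ∈ s, H (k q) (x q) (C q) := by
  induction s using Finset.cons_induction generalizing m with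
  | empty =>
      rw [Finset.piAntidiag_empty]
      split_ifs with h
      · subst h; simp [H_zero]
      · simp [Finset.sum_empty, H_zero_zero, h]
  | cons a s ha ih =>
      rw [Finset.sum_cons, Finset.sum_cons, H_add', Finset.piAntidiag_cons,
        Finset.sum_disjiUnion]
      refine Finset.sum_congr rfl fun p hp => ?_
      rw [Finset.sum_map, ih, Finset.mul_sum]
      refine Finset.sum_congr rfl fun g hg => ?_
      rw [Finset.mem_piAntidiag] at hg
      have hga : g a = 0 := by
        by_contra h; exact ha (hg.2 a h)
      have hp' : p.1 + p.2 = m := Finset.HasAntidiagonal.mem_antidiagonal.1 hp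
      simp only [addRightEmbedding_apply]
      have hA : (g + fun t => if t = a then p.1 else 0) a = p.1 := by simp [hga]
      have hS : ∀ q ∈ s, (g + fun t => if t = a then p.1 else 0) q = g q := fun q hq => by
        simp [ne_of_mem_of_not_mem hq ha]
      have hsum : s.sum (g + fun t => if t = a then p.1 else 0) = p.2 := by
        rw [Finset.sum_congr rfl hS]; exact hg.1
      have hprod : (∏ q ∈ s, H ((g + fun t => if t = a then p.1 else 0) q) (x q) (C q))
          = ∏ q ∈ s, H (g q) (x q) (C q) :=
        Finset.prod_congr rfl fun q hq => by rw [hS q hq]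
      rw [Nat.multinomial_cons, Finset.prod_cons, hA, hsum, hp',
        Nat.multinomial_congr hS, hprod]
      push_cast
      ring

lemma key_finite (x C : ℕ → ℝ) (s : Finset ℕ) (m : ℕ) :
    ∑ n ∈ Finset.finsuppAntidiag s m,
        ((m.factorial : ℝ) / (n.prod fun _ k => (k.factorial : ℝ))) *
          n.prod (fun q nq => H nq (x q) (C q))
      = H m (∑ q ∈ s, x q) (∑ q ∈ s, C q) := by
  classical
  rw [H_multinomial_finset]
  refine Finset.sum_nbij' (i := fun n => ⇑n)
    (j := fun k => if hk : k ∈ Finset.piAntidiag s m then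
      Finsupp.onFinset s k (fun q hq => (Finset.mem_piAntidiag.1 hk).2 q hq) else 0)
    ?_ ?_ ?_ ?_ ?_
  · intro n hn
    rw [Finset.mem_finsuppAntidiag] at hn
    rw [Finset.mem_piAntidiag]
    exact ⟨hn.1, fun q hq => hn.2 (Finsupp.mem_support_iff.2 hq)⟩
  · intro k hk
    simp only [dif_pos hk]
    rw [Finset.mem_finsuppAntidiag]
    rw [Finset.mem_piAntidiag] at hk
    constructor
    · simpa using hk.1
    · intro q hq
      exact hk.2 q (by simpa using hq)
  · intro n hn
    have h : (⇑n) ∈ Finset.piAntidiag s m := by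
      rw [Finset.mem_finsuppAntidiag] at hn
      rw [Finset.mem_piAntidiag]
      exact ⟨hn.1, fun q hq => hn.2 (Finsupp.mem_support_iff.2 hq)⟩
    simp only [dif_pos h]
    ext q
    simp
  · intro k hk
    simp only [dif_pos hk]
    simp
  · intro n hn
    rw [Finset.mem_finsuppAntidiag] at hn
    have hsupp : n.support ⊆ s := hn.2
    have hprod1 : (n.prod fun _ k => (k.factorial : ℝ)) = ∏ q ∈ s, ((n q).factorial : ℝ) :=
      Finsupp.prod_of_support_subset n hsupp _ (fun q _ => by simp)
    have hprod2 : (n.prod fun q nq => H nq (x q) (C q)) = ∏ q ∈ s, H (n q) (x q) (C q) :=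
      Finsupp.prod_of_support_subset n hsupp _ (fun q _ => H_zero _ _)
    have hspec : (∏ q ∈ s, ((n q).factorial : ℝ)) * (Nat.multinomial s ⇑n : ℝ)
        = (m.factorial : ℝ) := by
      rw [← Nat.cast_prod, ← Nat.cast_mul, Nat.multinomial_spec, hn.1]
    have hpos : (0:ℝ) < ∏ q ∈ s, ((n q).factorial : ℝ) :=
      Finset.prod_pos fun q _ => by positivity
    have hco : (m.factorial : ℝ) / (n.prod fun _ k => (k.factorial : ℝ))
        = (Nat.multinomial s ⇑n : ℝ) := by
      rw [hprod1, div_eq_iff hpos.ne', ← hspec]; ring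
    rw [hco, hprod2]

lemma H_nonneg {u e : ℝ} (hu : 0 ≤ u) (he : 0 ≤ e) (k : ℕ) : 0 ≤ H k u (-e) := by
  induction k using Nat.twoStepInduction with
  | zero => rw [H_zero]; norm_num
  | one => rw [H_one]; exact hu
  | more k ih ih1 =>
      rw [H_rec]
      have h1 : (0:ℝ) ≤ (k:ℝ)+1 := by positivity
      nlinarith [mul_nonneg hu ih1, mul_nonneg (mul_nonneg he h1) ih]

lemma H_mono {u u' e e' : ℝ} (hu : 0 ≤ u) (huu : u ≤ u') (he : 0 ≤ e) (hee : e ≤ e') (k : ℕ) :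
    H k u (-e) ≤ H k u' (-e') := by
  induction k using Nat.twoStepInduction with
  | zero => rw [H_zero, H_zero]
  | one => rw [H_one, H_one]; exact huu
  | more k ih ih1 =>
      rw [H_rec, H_rec]
      have h1 : u * H (k+1) u (-e) ≤ u' * H (k+1) u' (-e') :=
        mul_le_mul huu ih1 (H_nonneg hu he (k+1)) (hu.trans huu)
      have h2 : e * ((k:ℝ)+1) * H k u (-e) ≤ e' * ((k:ℝ)+1) * H k u' (-e') := by
        have hk1 : (0:ℝ) ≤ (k:ℝ)+1 := by positivity
        exact mul_le_mul (mul_le_mul hee le_rfl hk1 (he.trans hee)) ih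
          (H_nonneg hu he k) (mul_nonneg (he.trans hee) hk1)
      linarith
lemma H_abs_le (x e : ℝ) (he : 0 ≤ e) (k : ℕ) : |H k x e| ≤ H k |x| (-e) := by
  induction k using Nat.twoStepInduction with
  | zero => rw [H_zero, H_zero]; norm_num
  | one => rw [H_one, H_one]
  | more k ih ih1 =>
      rw [H_rec, H_rec]
      have tri : |x * H (k+1) x e - e * ((k:ℝ)+1) * H k x e|
          ≤ |x * H (k+1) x e| + |e * ((k:ℝ)+1) * H k x e| := abs_sub _ _
      rw [abs_mul, abs_mul, abs_mul, abs_of_nonneg he,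
        abs_of_nonneg (by positivity : (0:ℝ) ≤ (k:ℝ)+1)] at tri
      have h1 : |x| * |H (k+1) x e| ≤ |x| * H (k+1) |x| (-e) :=
        mul_le_mul_of_nonneg_left ih1 (abs_nonneg x)
      have h2 : e * ((k:ℝ)+1) * |H k x e| ≤ e * ((k:ℝ)+1) * H k |x| (-e) :=
        mul_le_mul_of_nonneg_left ih (by positivity)
      have : -e * ((k:ℝ)+1) * H k |x| (-e) = -(e * ((k:ℝ)+1) * H k |x| (-e)) := by ring
      rw [this]
      linarith

lemma H_cont (k : ℕ) : Continuous fun p : ℝ × ℝ => H k p.1 p.2 := by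
  induction k using Nat.twoStepInduction with
  | zero => simpa [H_zero] using continuous_const
  | one => simpa [H_one] using continuous_fst
  | more k ih ih1 =>
      simp only [H_rec]
      exact (continuous_fst.mul ih1).sub ((continuous_snd.mul continuous_const).mul ih)

set_option maxHeartbeats 1000000

/-- Multinomial formula for Hermite polynomials: for summable `x` and `a²`, the family
indexed by multiindices `n` (finitely supported `ℕ → ℕ`) with `|n| = m`, whose term is
`(m!/n!) · Π_q H_{n_q}(x_q; a_q²)` (all but finitely many factors equal `H_0 = 1`, so the
product is a finite product over the support of `n`), is summable with sum
`H_m(Σ_q x_q; Σ_q a_q²)`. -/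
theorem hermite_multinomial (x a : ℕ → ℝ) (hx : Summable x)
    (ha : Summable fun q => a q ^ 2) (m : ℕ) :
    HasSum
      (fun n : {n : ℕ →₀ ℕ // n.sum (fun _ k => k) = m} =>
        (m.factorial : ℝ) / (n.1.prod fun _ k => (k.factorial : ℝ)) *
          n.1.prod fun q nq => H nq (x q) (a q ^ 2))
      (H m (∑' q, x q) (∑' q, a q ^ 2)) := by
  classical
  have hc : ∀ q, (0:ℝ) ≤ a q ^ 2 := fun q => sq_nonneg _
  have hxa : Summable fun q => |x q| := hx.abs
  set M : ℝ := H m (∑' q, |x q|) (-(∑' q, a q ^ 2)) with hM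
  let P : ℕ → Finset {n : ℕ →₀ ℕ // n.sum (fun _ k => k) = m} := fun N =>
    (Finset.finsuppAntidiag (Finset.range N) m).attach.map
      ⟨fun p => ⟨p.1, (Finset.mem_finsuppAntidiag'.1 p.2).1⟩,
       fun p q h => Subtype.ext (by simpa using congrArg Subtype.val h)⟩
  have hPmem : ∀ (n : {n : ℕ →₀ ℕ // n.sum (fun _ k => k) = m}) (N : ℕ),
      n ∈ P N ↔ n.1.support ⊆ Finset.range N := by
    intro n N
    constructor
    · intro h
      simp only [P, Finset.mem_map, Finset.mem_attach, true_and, Subtype.exists,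
        Function.Embedding.coeFn_mk] at h
      obtain ⟨b, hb, h⟩ := h
      cases h
      exact (Finset.mem_finsuppAntidiag'.1 hb).2
    · intro h
      have hb : n.1 ∈ Finset.finsuppAntidiag (Finset.range N) m :=
        Finset.mem_finsuppAntidiag'.2 ⟨n.2, h⟩
      simp only [P, Finset.mem_map, Finset.mem_attach, true_and, Subtype.exists,
        Function.Embedding.coeFn_mk]
      exact ⟨n.1, hb, Subtype.ext rfl⟩
  have hPsum : ∀ (N : ℕ) (F : (ℕ →₀ ℕ) → ℝ),
      ∑ n ∈ P N, F n.1 = ∑ k ∈ Finset.finsuppAntidiag (Finset.range N) m, F k := by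
    intro N F
    simp only [P, Finset.sum_map, Function.Embedding.coeFn_mk]
    exact Finset.sum_attach _ _
  have hco : ∀ n : {n : ℕ →₀ ℕ // n.sum (fun _ k => k) = m},
      (0:ℝ) ≤ (m.factorial : ℝ) / (n.1.prod fun _ k => (k.factorial : ℝ)) := by
    intro n
    apply div_nonneg (by positivity)
    exact Finset.prod_nonneg fun q _ => by positivity
  have hgnn : ∀ n : {n : ℕ →₀ ℕ // n.sum (fun _ k => k) = m},
      (0:ℝ) ≤ (m.factorial : ℝ) / (n.1.prod fun _ k => (k.factorial : ℝ)) *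
        n.1.prod fun q nq => H nq |x q| (-(a q ^ 2)) := fun n =>
    mul_nonneg (hco n) (Finset.prod_nonneg fun q _ => H_nonneg (abs_nonneg _) (hc q) _)
  have hgsum : ∀ N, (∑ n ∈ P N, ((m.factorial : ℝ) / (n.1.prod fun _ k => (k.factorial : ℝ)) *
        n.1.prod fun q nq => H nq |x q| (-(a q ^ 2))))
      = H m (∑ q ∈ Finset.range N, |x q|) (-(∑ q ∈ Finset.range N, a q ^ 2)) := by
    intro N
    have h := key_finite (fun q => |x q|) (fun q => -(a q ^ 2)) (Finset.range N) m
    rw [Finset.sum_neg_distrib] at h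
    exact (hPsum N _).trans h
  have hgboundN : ∀ N,
      H m (∑ q ∈ Finset.range N, |x q|) (-(∑ q ∈ Finset.range N, a q ^ 2)) ≤ M := fun N =>
    H_mono (Finset.sum_nonneg fun q _ => abs_nonneg _)
      (hxa.sum_le_tsum _ (fun q _ => abs_nonneg _))
      (Finset.sum_nonneg fun q _ => hc q)
      (ha.sum_le_tsum _ (fun q _ => hc q)) m
  have hgbound : ∀ t : Finset {n : ℕ →₀ ℕ // n.sum (fun _ k => k) = m},
      (∑ n ∈ t, ((m.factorial : ℝ) / (n.1.prod fun _ k => (k.factorial : ℝ)) *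
        n.1.prod fun q nq => H nq |x q| (-(a q ^ 2)))) ≤ M := by
    intro t
    set N : ℕ := 1 + t.sup (fun n => n.1.support.sup id) with hN
    have hsub : t ⊆ P N := by
      intro n hn
      rw [hPmem]
      intro q hq
      rw [Finset.mem_range]
      have h1 : q ≤ n.1.support.sup id := Finset.le_sup (f := id) hq
      have h2 : n.1.support.sup id ≤ t.sup (fun n => n.1.support.sup id) :=
        Finset.le_sup (f := fun n => n.1.support.sup id) hn
      omega
    calc (∑ n ∈ t, ((m.factorial : ℝ) / (n.1.prod fun _ k => (k.factorial : ℝ)) *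
          n.1.prod fun q nq => H nq |x q| (-(a q ^ 2))))
        ≤ ∑ n ∈ P N, ((m.factorial : ℝ) / (n.1.prod fun _ k => (k.factorial : ℝ)) *
          n.1.prod fun q nq => H nq |x q| (-(a q ^ 2))) :=
          Finset.sum_le_sum_of_subset_of_nonneg hsub (fun n _ _ => hgnn n)
      _ = _ := hgsum N
      _ ≤ M := hgboundN N
  have hgsummable : Summable (fun n : {n : ℕ →₀ ℕ // n.sum (fun _ k => k) = m} =>
      (m.factorial : ℝ) / (n.1.prod fun _ k => (k.factorial : ℝ)) *
        n.1.prod fun q nq => H nq |x q| (-(a q ^ 2))) :=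
    summable_of_sum_le hgnn hgbound
  have hfsummable : Summable (fun n : {n : ℕ →₀ ℕ // n.sum (fun _ k => k) = m} =>
      (m.factorial : ℝ) / (n.1.prod fun _ k => (k.factorial : ℝ)) *
        n.1.prod fun q nq => H nq (x q) (a q ^ 2)) := by
    refine Summable.of_norm_bounded hgsummable ?_
    intro n
    rw [Real.norm_eq_abs, abs_mul, abs_of_nonneg (hco n)]
    refine mul_le_mul_of_nonneg_left ?_ (hco n)
    rw [Finsupp.prod, Finsupp.prod, Finset.abs_prod]
    exact Finset.prod_le_prod (fun q _ => abs_nonneg _) (fun q _ => H_abs_le _ _ (hc q) _)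
  have hmono : Monotone P := by
    intro N N' hNN n hn
    rw [hPmem] at hn ⊢
    refine hn.trans ?_
    intro q hq
    rw [Finset.mem_range] at *
    omega
  have hcov : ∀ n : {n : ℕ →₀ ℕ // n.sum (fun _ k => k) = m}, ∃ N, n ∈ P N := by
    intro n
    refine ⟨n.1.support.sup id + 1, (hPmem n _).2 ?_⟩
    intro q hq
    rw [Finset.mem_range]
    have h1 : q ≤ n.1.support.sup id := Finset.le_sup (f := id) hq
    omega
  have htend1 : Filter.Tendsto (fun N => ∑ n ∈ P N,
      ((m.factorial : ℝ) / (n.1.prod fun _ k => (k.factorial : ℝ)) *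
        n.1.prod fun q nq => H nq (x q) (a q ^ 2))) Filter.atTop
      (nhds (∑' n : {n : ℕ →₀ ℕ // n.sum (fun _ k => k) = m},
        ((m.factorial : ℝ) / (n.1.prod fun _ k => (k.factorial : ℝ)) *
          n.1.prod fun q nq => H nq (x q) (a q ^ 2)))) :=
    hfsummable.hasSum.comp (Filter.tendsto_atTop_finset_of_monotone hmono hcov)
  have hfsum : ∀ N, (∑ n ∈ P N,
      ((m.factorial : ℝ) / (n.1.prod fun _ k => (k.factorial : ℝ)) *
        n.1.prod fun q nq => H nq (x q) (a q ^ 2)))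
      = H m (∑ q ∈ Finset.range N, x q) (∑ q ∈ Finset.range N, a q ^ 2) :=
    fun N => (hPsum N _).trans (key_finite x (fun q => a q ^ 2) (Finset.range N) m)
  have htend2 : Filter.Tendsto (fun N => H m (∑ q ∈ Finset.range N, x q)
      (∑ q ∈ Finset.range N, a q ^ 2)) Filter.atTop
      (nhds (H m (∑' q, x q) (∑' q, a q ^ 2))) := by
    have h1 := hx.hasSum.tendsto_sum_nat
    have h2 := ha.hasSum.tendsto_sum_nat
    exact ((H_cont m).tendsto _).comp (h1.prodMk_nhds h2)
  have heq : (∑' n : {n : ℕ →₀ ℕ // n.sum (fun _ k => k) = m},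
      ((m.factorial : ℝ) / (n.1.prod fun _ k => (k.factorial : ℝ)) *
        n.1.prod fun q nq => H nq (x q) (a q ^ 2)))
      = H m (∑' q, x q) (∑' q, a q ^ 2) := by
    refine tendsto_nhds_unique ?_ htend2
    simp only [hfsum] at htend1
    exact htend1
  exact heq ▸ hfsummable.hasSum
end

section
/- There exist numerical constants c₀, c₁, c₂ > 0 such that for every integer m ≥ 1 and every q₀ ∈ ℕ, the sum over all multiindices n with |n| = m and q̄(n) + n_{q̄(n)} ≥ q₀ of (m!/n!) · 2^{(q₀ − q̄(n))/2} is at most c₀ · m! · (m + c₂)^m · (q₀ + c₁)^m (the sum being taken in [0, ∞]). -/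
open scoped ENNReal

/-- For a multiindex `n` (a finitely supported function `ℕ → ℕ`), `qbar n` is the largest
`q` with `n_q > 0` (and `0` for the zero multiindex). -/
def qbar (n : ℕ →₀ ℕ) : ℕ := n.support.sup id

/-- The multiindex factorial `n! = Π_q (n_q)!`, as a real number. -/
noncomputable def mfact (n : ℕ →₀ ℕ) : ℝ := n.prod fun _ k => (k.factorial : ℝ)

private lemma pow_div_fact_le_exp (x : ℝ) (hx : 0 ≤ x) (m : ℕ) :
    x ^ m / m.factorial ≤ Real.exp x := by
  calc x ^ m / m.factorial
      ≤ ∑ i ∈ Finset.range (m + 1), x ^ i / i.factorial := by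
        refine Finset.single_le_sum (f := fun i => x ^ i / (i.factorial : ℝ)) ?_
          (Finset.self_mem_range_succ m)
        intro i _
        positivity
    _ ≤ Real.exp x := Real.sum_le_exp_of_nonneg hx _

private lemma exp_quarter_pow : (Real.exp (4⁻¹)) ^ (4 : ℕ) = Real.exp 1 := by
  rw [← Real.exp_nat_mul]
  norm_num

private lemma exp_quarter_le_two : Real.exp (4⁻¹) ≤ 2 := by
  nlinarith [exp_quarter_pow, Real.exp_one_lt_d9, Real.exp_pos (4⁻¹ : ℝ),
    sq_nonneg (Real.exp (4⁻¹) - 2), sq_nonneg (Real.exp (4⁻¹) + 2)]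

private lemma inv_sqrt_pow_four : ((2:ℝ) ^ (-(2:ℝ)⁻¹)) ^ (4 : ℕ) = 4⁻¹ := by
  rw [← Real.rpow_natCast ((2:ℝ) ^ (-(2:ℝ)⁻¹)) 4, ← Real.rpow_mul (by norm_num)]
  norm_num

private lemma rho_le : Real.exp (4⁻¹) * (2:ℝ) ^ (-(2:ℝ)⁻¹) ≤ 11/12 := by
  refine le_of_pow_le_pow_left₀ (n := 4) (by norm_num) (by norm_num) ?_
  rw [mul_pow, exp_quarter_pow, inv_sqrt_pow_four]
  nlinarith [Real.exp_one_lt_d9]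

private lemma sqrt_two_le : (2:ℝ) ^ ((2:ℝ)⁻¹) ≤ 3/2 := by
  have h2 : ((2:ℝ) ^ ((2:ℝ)⁻¹)) ^ (2 : ℕ) = 2 := by
    rw [← Real.rpow_natCast ((2:ℝ) ^ ((2:ℝ)⁻¹)) 2, ← Real.rpow_mul (by norm_num)]
    norm_num
  nlinarith [Real.rpow_nonneg (by norm_num : (0:ℝ) ≤ 2) ((2:ℝ)⁻¹)]

private lemma term_bound (m q₀ Qmin : ℕ) (hm : 1 ≤ m) (hq : q₀ ≤ Qmin + m)
    (hQq : Qmin ≤ q₀) (j : ℕ) :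
    ((Qmin : ℝ) + j + 1) ^ m * (2:ℝ) ^ (((q₀ : ℝ) - ((Qmin : ℝ) + j)) / 2) ≤
      (2 * m.factorial * 6 ^ m * ((q₀ : ℝ) + 1) ^ m) * (11/12) ^ j := by
  have hq' : (q₀ : ℝ) ≤ (Qmin : ℝ) + m := by exact_mod_cast hq
  have hQq' : (Qmin : ℝ) ≤ q₀ := by exact_mod_cast hQq
  set s : ℝ := (2:ℝ) ^ ((2:ℝ)⁻¹) with hs
  set x : ℝ := (2:ℝ) ^ (-(2:ℝ)⁻¹) with hx
  have hs0 : 0 ≤ s := Real.rpow_nonneg (by norm_num) _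
  have hx0 : 0 ≤ x := Real.rpow_nonneg (by norm_num) _
  have hE0 : 0 < Real.exp (4⁻¹) := Real.exp_pos _
  -- bound on the power of 2
  have h2 : (2:ℝ) ^ (((q₀ : ℝ) - ((Qmin : ℝ) + j)) / 2) ≤ s ^ m * x ^ j := by
    have e1 : (2:ℝ) ^ (((m : ℝ) - j) / 2) = s ^ m * x ^ j := by
      have : ((m : ℝ) - j) / 2 = (2:ℝ)⁻¹ * m + (-(2:ℝ)⁻¹) * j := by ring
      rw [this, Real.rpow_add (by norm_num), Real.rpow_mul (by norm_num),
        Real.rpow_mul (by norm_num), Real.rpow_natCast, Real.rpow_natCast]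
    rw [← e1]
    apply Real.rpow_le_rpow_of_exponent_le (by norm_num)
    linarith
  -- bound on the polynomial factor
  have h1 : ((Qmin : ℝ) + j + 1) ^ m ≤ ((q₀ : ℝ) + 1) ^ m * ((j : ℝ) + 1) ^ m := by
    rw [← mul_pow]
    apply pow_le_pow_left₀ (by positivity)
    have hj0 : (0:ℝ) ≤ j := Nat.cast_nonneg j
    nlinarith
  -- exponential bound on (j+1)^m
  have h4 : ((j : ℝ) + 1) ^ m ≤
      (m.factorial : ℝ) * 4 ^ m * Real.exp (4⁻¹) * Real.exp (4⁻¹) ^ j := by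
    have := pow_div_fact_le_exp (((j : ℝ) + 1) / 4) (by positivity) m
    have hfac : (0:ℝ) < m.factorial := by exact_mod_cast m.factorial_pos
    have hE : Real.exp (((j : ℝ) + 1) / 4) = Real.exp (4⁻¹) * Real.exp (4⁻¹) ^ j := by
      rw [← Real.exp_nat_mul, ← Real.exp_add]
      ring_nf
    have h' : (((j : ℝ) + 1) / 4) ^ m ≤ m.factorial * Real.exp (((j : ℝ) + 1) / 4) := by
      rw [div_le_iff₀ hfac] at this
      linarith [this]
    have e2 : ((j : ℝ) + 1) ^ m = 4 ^ m * (((j : ℝ) + 1) / 4) ^ m := by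
      rw [← mul_pow]; ring_nf
    rw [e2, hE] at *
    calc 4 ^ m * (((j : ℝ) + 1) / 4) ^ m
        ≤ 4 ^ m * (m.factorial * (Real.exp (4⁻¹) * Real.exp (4⁻¹) ^ j)) := by
          apply mul_le_mul_of_nonneg_left h' (by positivity)
      _ = (m.factorial : ℝ) * 4 ^ m * Real.exp (4⁻¹) * Real.exp (4⁻¹) ^ j := by ring
  calc ((Qmin : ℝ) + j + 1) ^ m * (2:ℝ) ^ (((q₀ : ℝ) - ((Qmin : ℝ) + j)) / 2)
      ≤ (((q₀ : ℝ) + 1) ^ m * ((j : ℝ) + 1) ^ m) * (s ^ m * x ^ j) := by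
        apply mul_le_mul h1 h2 (Real.rpow_nonneg (by norm_num) _) (by positivity)
    _ ≤ (((q₀ : ℝ) + 1) ^ m *
          ((m.factorial : ℝ) * 4 ^ m * Real.exp (4⁻¹) * Real.exp (4⁻¹) ^ j)) *
          (s ^ m * x ^ j) := by
        have : (0:ℝ) ≤ ((q₀ : ℝ) + 1) ^ m := by positivity
        have hsx : (0:ℝ) ≤ s ^ m * x ^ j := by positivity
        apply mul_le_mul_of_nonneg_right _ hsx
        exact mul_le_mul_of_nonneg_left h4 this
    _ = ((m.factorial : ℝ) * ((4 * s) ^ m) * ((q₀ : ℝ) + 1) ^ m * Real.exp (4⁻¹)) *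
          ((Real.exp (4⁻¹) * x) ^ j) := by
        rw [mul_pow, mul_pow]; ring
    _ ≤ ((m.factorial : ℝ) * (6 ^ m) * ((q₀ : ℝ) + 1) ^ m * 2) * ((11/12) ^ j) := by
        have h6 : (4 * s) ^ m ≤ 6 ^ m := by
          apply pow_le_pow_left₀ (by positivity)
          nlinarith [sqrt_two_le]
        have h11 : (Real.exp (4⁻¹) * x) ^ j ≤ (11/12) ^ j := by
          apply pow_le_pow_left₀ (by positivity)
          exact rho_le
        have hfac : (0:ℝ) ≤ m.factorial := Nat.cast_nonneg _
        apply mul_le_mul _ h11 (by positivity) (by positivity)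
        have := exp_quarter_le_two
        apply mul_le_mul _ this hE0.le (by positivity)
        apply mul_le_mul_of_nonneg_right _ (by positivity)
        exact mul_le_mul_of_nonneg_left h6 hfac
    _ = (2 * m.factorial * 6 ^ m * ((q₀ : ℝ) + 1) ^ m) * (11/12) ^ j := by ring

/-- There are numerical constants `c₀, c₁, c₂ > 0` such that for all `m ≥ 1` and `q₀ ∈ ℕ`,
`Σ_{|n| = m, q̄(n) + n_{q̄(n)} ≥ q₀} (m!/n!) · 2^{(q₀ − q̄(n))/2}
  ≤ c₀ · m! · (m + c₂)^m · (q₀ + c₁)^m`, the sum being taken in `[0, ∞]`. -/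
theorem sum_multiindices_bound :
    ∃ c₀ > (0 : ℝ), ∃ c₁ > (0 : ℝ), ∃ c₂ > (0 : ℝ), ∀ m : ℕ, 1 ≤ m → ∀ q₀ : ℕ,
      ∑' n : {n : ℕ →₀ ℕ // n.sum (fun _ k => k) = m ∧ q₀ ≤ qbar n + n (qbar n)},
          ENNReal.ofReal ((m.factorial : ℝ) / mfact n.1 *
            (2 : ℝ) ^ (((q₀ : ℝ) - (qbar n.1 : ℝ)) / 2)) ≤
        ENNReal.ofReal (c₀ * (m.factorial : ℝ) * ((m : ℝ) + c₂) ^ m *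
          ((q₀ : ℝ) + c₁) ^ m) := by
  classical
  refine ⟨24, by norm_num, 1, by norm_num, 5, by norm_num, ?_⟩
  intro m hm q₀
  set Qmin : ℕ := q₀ - m with hQdef
  have hq : q₀ ≤ Qmin + m := by omega
  have hQq : Qmin ≤ q₀ := by omega
  -- the comparison function on pairs
  set F : ℕ × (ℕ → ℕ) → ℝ≥0∞ := fun p =>
    if Qmin ≤ p.1 ∧ p.2 ∈ Finset.piAntidiag (Finset.range (p.1 + 1)) m then
      (Nat.multinomial (Finset.range (p.1 + 1)) p.2 : ℝ≥0∞) *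
        ENNReal.ofReal ((2:ℝ) ^ (((q₀ : ℝ) - (p.1 : ℝ)) / 2))
    else 0 with hF
  set G : ℕ → ℝ≥0∞ := fun Q =>
    if Qmin ≤ Q then
      (((Q + 1) ^ m : ℕ) : ℝ≥0∞) *
        ENNReal.ofReal ((2:ℝ) ^ (((q₀ : ℝ) - (Q : ℝ)) / 2))
    else 0 with hG
  have key : ∀ x : {n : ℕ →₀ ℕ // n.sum (fun _ k => k) = m ∧ q₀ ≤ qbar n + n (qbar n)},
      ENNReal.ofReal ((m.factorial : ℝ) / mfact x.1 *
        (2 : ℝ) ^ (((q₀ : ℝ) - (qbar x.1 : ℝ)) / 2)) = F (qbar x.1, ⇑x.1) := by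
    rintro ⟨n, hsum, hcon⟩
    dsimp only
    set Q : ℕ := qbar n with hQ
    -- basic facts
    have hne : n ≠ 0 := by
      rintro rfl
      simp [Finsupp.sum] at hsum
      omega
    have hsupp : n.support ⊆ Finset.range (Q + 1) := by
      intro i hi
      rw [Finset.mem_range, Nat.lt_succ_iff]
      exact Finset.le_sup (f := id) hi
    have hval : ∀ q, n q ≤ m := by
      intro q
      by_cases hqs : q ∈ n.support
      · rw [← hsum]
        exact Finset.single_le_sum (f := fun i => n i) (fun i _ => Nat.zero_le _) hqs
      · simp [Finsupp.notMem_support_iff.mp hqs]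
    have hQmin : Qmin ≤ Q := by
      have h1 := hval Q
      omega
    have hrange : ∑ i ∈ Finset.range (Q + 1), n i = m := by
      rw [← hsum]
      exact (Finsupp.sum_of_support_subset n hsupp (fun _ k => k) (fun _ _ => rfl)).symm
    have hmem : ⇑n ∈ Finset.piAntidiag (Finset.range (Q + 1)) m := by
      rw [Finset.mem_piAntidiag]
      exact ⟨hrange, fun i hi => hsupp (Finsupp.mem_support_iff.mpr hi)⟩
    have hprod : mfact n = ((∏ i ∈ Finset.range (Q + 1), (n i).factorial : ℕ) : ℝ) := by
      rw [mfact, Finsupp.prod_of_support_subset n hsupp _ (by simp)]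
      push_cast
      rfl
    have hmfactpos : 0 < mfact n := by
      rw [hprod]
      positivity
    have hmult : (m.factorial : ℝ) / mfact n =
        (Nat.multinomial (Finset.range (Q + 1)) ⇑n : ℝ) := by
      have hspec := Nat.multinomial_spec (Finset.range (Q + 1)) ⇑n
      rw [hrange] at hspec
      have hnat : m.factorial = Nat.multinomial (Finset.range (Q + 1)) ⇑n *
          ∏ i ∈ Finset.range (Q + 1), (n i).factorial := by
        rw [mul_comm]; exact hspec.symm
      rw [div_eq_iff hmfactpos.ne', hprod]
      exact_mod_cast hnat
    simp only [hF]
    rw [if_pos ⟨hQmin, hmem⟩, hmult,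
      ENNReal.ofReal_mul (Nat.cast_nonneg _), ENNReal.ofReal_natCast]
  have hinj : Function.Injective
      (fun x : {n : ℕ →₀ ℕ // n.sum (fun _ k => k) = m ∧ q₀ ≤ qbar n + n (qbar n)} =>
        (qbar x.1, ⇑x.1)) := by
    intro x y hxy
    have := congrArg Prod.snd hxy
    exact Subtype.ext (DFunLike.coe_injective this)
  calc ∑' x : {n : ℕ →₀ ℕ // n.sum (fun _ k => k) = m ∧ q₀ ≤ qbar n + n (qbar n)},
        ENNReal.ofReal ((m.factorial : ℝ) / mfact x.1 *
          (2 : ℝ) ^ (((q₀ : ℝ) - (qbar x.1 : ℝ)) / 2))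
      = ∑' x : {n : ℕ →₀ ℕ // n.sum (fun _ k => k) = m ∧ q₀ ≤ qbar n + n (qbar n)},
          F (qbar x.1, ⇑x.1) := tsum_congr key
    _ ≤ ∑' p : ℕ × (ℕ → ℕ), F p := ENNReal.tsum_comp_le_tsum_of_injective hinj F
    _ = ∑' Q : ℕ, ∑' g : ℕ → ℕ, F (Q, g) := ENNReal.tsum_prod'
    _ = ∑' Q : ℕ, G Q := by
        refine tsum_congr fun Q => ?_
        by_cases hQ : Qmin ≤ Q
        · simp only [hG]
          rw [if_pos hQ]
          rw [tsum_eq_sum (s := Finset.piAntidiag (Finset.range (Q + 1)) m)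
            (fun g hg => by simp only [hF]; exact if_neg (by tauto))]
          have : ∀ g ∈ Finset.piAntidiag (Finset.range (Q + 1)) m,
              F (Q, g) = (Nat.multinomial (Finset.range (Q + 1)) g : ℝ≥0∞) *
                ENNReal.ofReal ((2:ℝ) ^ (((q₀ : ℝ) - (Q : ℝ)) / 2)) := by
            intro g hg
            simp only [hF]
            exact if_pos ⟨hQ, hg⟩
          rw [Finset.sum_congr rfl this, ← Finset.sum_mul]
          congr 1
          rw [← Nat.cast_sum]
          congr 1
          have := Finset.sum_pow_eq_sum_piAntidiag (Finset.range (Q + 1))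
            (fun _ => (1 : ℕ)) m
          simpa using this.symm
        · simp only [hG]
          rw [if_neg hQ]
          refine Summable.tsum_eq_zero_iff ENNReal.summable |>.mpr fun g => ?_
          simp only [hF]
          exact if_neg (by tauto)
    _ = ∑' j : ℕ, G (j + Qmin) := by
        have h := Summable.sum_add_tsum_nat_add' (f := G) (k := Qmin) ENNReal.summable
        have hzero : ∑ i ∈ Finset.range Qmin, G i = 0 := by
          refine Finset.sum_eq_zero fun i hi => ?_
          simp only [hG]
          exact if_neg (by simp at hi; omega)
        rw [← h, hzero, zero_add]
    _ ≤ ∑' j : ℕ, ENNReal.ofReal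
          ((2 * m.factorial * 6 ^ m * ((q₀ : ℝ) + 1) ^ m) * (11/12) ^ j) := by
        refine ENNReal.tsum_le_tsum fun j => ?_
        simp only [hG]
        rw [if_pos (Nat.le_add_left Qmin j)]
        have : (((j + Qmin + 1) ^ m : ℕ) : ℝ≥0∞) *
            ENNReal.ofReal ((2:ℝ) ^ (((q₀ : ℝ) - ((j + Qmin : ℕ) : ℝ)) / 2)) =
            ENNReal.ofReal ((((Qmin : ℝ) + j + 1)) ^ m *
              (2:ℝ) ^ (((q₀ : ℝ) - ((Qmin : ℝ) + j)) / 2)) := by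
          rw [ENNReal.ofReal_mul (by positivity)]
          congr 1
          · rw [← ENNReal.ofReal_natCast]
            congr 1
            push_cast
            ring
          · congr 2
            push_cast
            ring
        rw [this]
        exact ENNReal.ofReal_le_ofReal (term_bound m q₀ Qmin hm hq hQq j)
    _ = ENNReal.ofReal ((2 * m.factorial * 6 ^ m * ((q₀ : ℝ) + 1) ^ m) * 12) := by
        rw [← ENNReal.ofReal_tsum_of_nonneg (fun j => by positivity)
          (((summable_geometric_of_lt_one (by norm_num) (by norm_num))).mul_left _)]
        congr 1
        rw [tsum_mul_left, tsum_geometric_of_lt_one (by norm_num) (by norm_num)]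
        norm_num
    _ ≤ ENNReal.ofReal (24 * (m.factorial : ℝ) * ((m : ℝ) + 5) ^ m *
          ((q₀ : ℝ) + 1) ^ m) := by
        refine ENNReal.ofReal_le_ofReal ?_
        have hm1 : (1:ℝ) ≤ (m : ℝ) := by exact_mod_cast hm
        have h6 : (6:ℝ) ^ m ≤ ((m : ℝ) + 5) ^ m := by
          apply pow_le_pow_left₀ (by norm_num)
          linarith
        have hq0 : (0:ℝ) ≤ ((q₀ : ℝ) + 1) ^ m := by positivity
        have hf0 : (0:ℝ) ≤ (m.factorial : ℝ) := Nat.cast_nonneg _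
        nlinarith [mul_le_mul_of_nonneg_right
          (mul_le_mul_of_nonneg_left h6 hf0) hq0]
end

section
/- For every integer m ≥ 1 and every γ > 0, the function f : [0, ∞) → ℝ defined by f(x) = max(e^{m−1}, exp(γ · x^{1/m})) is nondecreasing on [0, ∞) and convex on [0, ∞). -/
open Real Set

/-- Gluing lemma: if `g` is monotone on `[0,∞)` and convex on `[x₀,∞)` with `x₀ ≥ 0`,
then `max (g x₀) (g ·)` is convex on `[0,∞)`. -/
lemma glue_convex_max {x0 : ℝ} (hx0 : 0 ≤ x0) {g : ℝ → ℝ}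
    (hmono : MonotoneOn g (Ici 0)) (hconv : ConvexOn ℝ (Ici x0) g) :
    ConvexOn ℝ (Ici 0) (fun x => max (g x0) (g x)) := by
  refine ⟨convex_Ici 0, ?_⟩
  intro x hx y hy a b ha hb hab
  simp only [smul_eq_mul]
  rcases eq_or_lt_of_le ha with ha0 | ha
  · have hb1 : b = 1 := by linarith
    simp [← ha0, hb1]
  rcases eq_or_lt_of_le hb with hb0 | hb
  · have ha1 : a = 1 := by linarith
    simp [← hb0, ha1]
  have hx' : (0:ℝ) ≤ x := hx
  have hy' : (0:ℝ) ≤ y := hy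
  have hz : (0:ℝ) ≤ a * x + b * y := by positivity
  have hRHS : g x0 ≤ a * max (g x0) (g x) + b * max (g x0) (g y) := by
    calc g x0 = a * g x0 + b * g x0 := by rw [← add_mul, hab, one_mul]
    _ ≤ _ := by
        gcongr
        · exact le_max_left _ _
        · exact le_max_left _ _
  refine max_le hRHS ?_
  rcases le_or_gt (a * x + b * y) x0 with hzx0 | hzx0
  · exact le_trans (hmono hz hx0 hzx0) hRHS
  · -- x0 < a*x + b*y
    rcases le_or_gt x0 x with hxx0 | hxx0
    · rcases le_or_gt x0 y with hyy0 | hyy0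
      · -- both ≥ x0
        have := hconv.2 hxx0 hyy0 ha.le hb.le hab
        simp only [smul_eq_mul] at this
        refine this.trans ?_
        gcongr
        · exact le_max_right _ _
        · exact le_max_right _ _
      · -- y < x0 ≤ x : use point a*x + b*x0
        have hle : a * x + b * y ≤ a * x + b * x0 := by nlinarith
        have hmem : a * x + b * x0 ∈ Ici x0 := by
          have : x0 = a * x0 + b * x0 := by rw [← add_mul, hab, one_mul]
          rw [mem_Ici, this]
          nlinarith
        have h1 : g (a * x + b * y) ≤ g (a * x + b * x0) :=
          hmono hz (le_trans hx0 hmem) hle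
        have h2 := hconv.2 hxx0 (le_refl x0 : x0 ∈ Ici x0) ha.le hb.le hab
        simp only [smul_eq_mul] at h2
        refine h1.trans (h2.trans ?_)
        gcongr
        · exact le_max_right _ _
        · exact le_max_left _ _
    · rcases le_or_gt x0 y with hyy0 | hyy0
      · -- x < x0 ≤ y : use point a*x0 + b*y
        have hle : a * x + b * y ≤ a * x0 + b * y := by nlinarith
        have hmem : a * x0 + b * y ∈ Ici x0 := by
          have : x0 = a * x0 + b * x0 := by rw [← add_mul, hab, one_mul]
          rw [mem_Ici]
          nlinarith
        have h1 : g (a * x + b * y) ≤ g (a * x0 + b * y) :=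
          hmono hz (le_trans hx0 hmem) hle
        have h2 := hconv.2 (le_refl x0 : x0 ∈ Ici x0) hyy0 ha.le hb.le hab
        simp only [smul_eq_mul] at h2
        refine h1.trans (h2.trans ?_)
        gcongr
        · exact le_max_left _ _
        · exact le_max_right _ _
      · -- both < x0 : contradiction
        exfalso
        nlinarith

/-- For every integer `m ≥ 1` and every `γ > 0`, the function
`f(x) = max(e^{m−1}, exp(γ·x^{1/m}))` is nondecreasing and convex on `[0, ∞)`. -/
theorem max_exp_rpow_monotone_convex (m : ℕ) (hm : 1 ≤ m) (γ : ℝ) (hγ : 0 < γ) :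
    MonotoneOn
        (fun x : ℝ => max (Real.exp ((m : ℝ) - 1)) (Real.exp (γ * x ^ (1 / (m : ℝ)))))
        (Set.Ici 0) ∧
      ConvexOn ℝ (Set.Ici 0)
        (fun x : ℝ => max (Real.exp ((m : ℝ) - 1)) (Real.exp (γ * x ^ (1 / (m : ℝ))))) := by
  have hm0 : (0:ℝ) < m := by exact_mod_cast hm
  set p : ℝ := 1 / (m : ℝ) with hp_def
  have hp : 0 < p := by positivity
  have hmne : (m : ℝ) ≠ 0 := hm0.ne'
  have hpm : p * m = 1 := by rw [hp_def]; field_simp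
  set c : ℝ := ((m : ℝ) - 1) / γ with hc_def
  have hc : 0 ≤ c := by
    apply div_nonneg _ hγ.le
    have : (1:ℝ) ≤ m := by exact_mod_cast hm
    linarith
  set x0 : ℝ := c ^ (m : ℝ) with hx0_def
  have hx0 : 0 ≤ x0 := rpow_nonneg hc _
  set g : ℝ → ℝ := fun x => Real.exp (γ * x ^ p) with hg_def
  -- monotone
  have hmono : MonotoneOn g (Ici 0) := by
    intro x hx y hy hxy
    exact exp_le_exp.2 (mul_le_mul_of_nonneg_left
      (Real.rpow_le_rpow hx hxy hp.le) hγ.le)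
  -- x0 ^ p = c
  have hx0p : x0 ^ p = c := by
    rw [hx0_def, ← Real.rpow_mul hc,
      show (m : ℝ) * p = 1 by rw [mul_comm]; exact hpm, Real.rpow_one]
  have hgx0 : g x0 = Real.exp ((m:ℝ) - 1) := by
    have h0 : g x0 = Real.exp (γ * x0 ^ p) := rfl
    rw [h0, hx0p, hc_def, mul_div_cancel₀ _ hγ.ne']
  -- convexity on Ici x0
  have hconv : ConvexOn ℝ (Ici x0) g := by
    have hint : interior (Ici x0) = Ioi x0 := interior_Ici
    set g' : ℝ → ℝ := fun x => Real.exp (γ * x ^ p) * (γ * (p * x ^ (p - 1))) with hg'_def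
    set g'' : ℝ → ℝ := fun x =>
      Real.exp (γ * x ^ p) * (γ * (p * x ^ (p - 1))) * (γ * (p * x ^ (p - 1)))
        + Real.exp (γ * x ^ p) * (γ * (p * ((p - 1) * x ^ (p - 1 - 1)))) with hg''_def
    have hd1 : ∀ x : ℝ, 0 < x → HasDerivAt g (g' x) x := by
      intro x hx
      have h1 : HasDerivAt (fun y : ℝ => y ^ p) (p * x ^ (p - 1)) x :=
        Real.hasDerivAt_rpow_const (Or.inl hx.ne')
      have h2 : HasDerivAt (fun y : ℝ => γ * y ^ p) (γ * (p * x ^ (p - 1))) x :=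
        h1.const_mul γ
      exact (Real.hasDerivAt_exp _).comp x h2
    have hd2 : ∀ x : ℝ, 0 < x → HasDerivAt g' (g'' x) x := by
      intro x hx
      have hA : HasDerivAt (fun y : ℝ => Real.exp (γ * y ^ p))
          (Real.exp (γ * x ^ p) * (γ * (p * x ^ (p - 1)))) x := hd1 x hx
      have h1 : HasDerivAt (fun y : ℝ => y ^ (p - 1)) ((p - 1) * x ^ (p - 1 - 1)) x :=
        Real.hasDerivAt_rpow_const (Or.inl hx.ne')
      have hB : HasDerivAt (fun y : ℝ => γ * (p * y ^ (p - 1)))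
          (γ * (p * ((p - 1) * x ^ (p - 1 - 1)))) x := (h1.const_mul p).const_mul γ
      exact hA.mul hB
    have hcont : ContinuousOn g (Ici x0) := by
      apply Continuous.continuousOn
      exact Real.continuous_exp.comp
        (continuous_const.mul (continuous_id.rpow_const fun x => Or.inr hp.le))
    refine convexOn_of_hasDerivWithinAt2_nonneg (convex_Ici x0) hcont
      (f' := g') (f'' := g'') ?_ ?_ ?_
    · intro x hx
      rw [hint] at hx
      exact (hd1 x (lt_of_le_of_lt hx0 hx)).hasDerivWithinAt
    · intro x hx
      rw [hint] at hx
      exact (hd2 x (lt_of_le_of_lt hx0 hx)).hasDerivWithinAt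
    · intro x hx
      rw [hint, mem_Ioi] at hx
      have hxpos : 0 < x := lt_of_le_of_lt hx0 hx
      have hxp : c ≤ x ^ p := by
        rw [← hx0p]; exact Real.rpow_le_rpow hx0 hx.le hp.le
      have hkey : 0 ≤ γ * (p * x ^ p) + (p - 1) := by
        have h1 : γ * c = (m : ℝ) - 1 := by
          rw [hc_def, mul_div_cancel₀ _ hγ.ne']
        have h2 : γ * x ^ p ≥ (m : ℝ) - 1 := by
          rw [← h1]; exact mul_le_mul_of_nonneg_left hxp hγ.le
        nlinarith
      have hsplit : x ^ (p - 1) * x ^ (p - 1) = x ^ (p - 1 - 1) * x ^ p := by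
        rw [← Real.rpow_add hxpos, ← Real.rpow_add hxpos]; ring_nf
      have hgeq : g'' x =
          Real.exp (γ * x ^ p) * (γ * p) * (x ^ (p - 1 - 1) * (γ * (p * x ^ p) + (p - 1))) := by
        rw [hg''_def]
        simp only
        linear_combination (Real.exp (γ * x ^ p) * γ ^ 2 * p ^ 2) * hsplit
      rw [hgeq]
      have h1 : (0:ℝ) ≤ Real.exp (γ * x ^ p) * (γ * p) := by positivity
      have h2 : (0:ℝ) ≤ x ^ (p - 1 - 1) := Real.rpow_nonneg hxpos.le _
      exact mul_nonneg h1 (mul_nonneg h2 hkey)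
  constructor
  · intro x hx y hy hxy
    exact max_le_max le_rfl (hmono hx hy hxy)
  · have := glue_convex_max hx0 hmono hconv
    convert this using 2 with x
    rw [hgx0]
end

section
/- Let Z be a nonnegative random variable on a probability space, let m ≥ 1 be an integer and M > 0 a real number. Assume that E[Z] ≤ M and that E[Z^p] ≤ ((p − 1)^m · M)^p for every even integer p ≥ 2. Then for every γ ≥ 0 with γ · e · M^{1/m} < 1 one has E[exp(γ · Z^{1/m})] ≤ 1 / (1 − γ · e · M^{1/m}). -/
open MeasureTheory ENNReal

lemma lyapunov_aux {Ω : Type*} [MeasurableSpace Ω] (P : Measure Ω) [IsProbabilityMeasure P]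
    {f : Ω → ℝ≥0∞} (hf : Measurable f) {a b : ℝ} (ha : 0 < a) (hab : a ≤ b) :
    ∫⁻ ω, f ω ^ a ∂P ≤ (∫⁻ ω, f ω ^ b ∂P) ^ (a / b) := by
  rcases eq_or_lt_of_le hab with rfl | h
  · rw [div_self ha.ne', ENNReal.rpow_one]
  · have hb : 0 < b := ha.trans h
    have hr : 1 < b / a := (one_lt_div ha).2 h
    have hconj : (b / a).HolderConjugate ((b/a)/((b/a)-1)) := Real.HolderConjugate.conjExponent hr
    have hfa : Measurable fun ω => f ω ^ a := hf.pow measurable_const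
    have key := ENNReal.lintegral_mul_le_Lp_mul_Lq P hconj hfa.aemeasurable
      (aemeasurable_const (b := (1 : ℝ≥0∞)))
    simp only [Pi.mul_apply, mul_one, ENNReal.one_rpow, lintegral_one, measure_univ,
      ENNReal.one_rpow, mul_one] at key
    calc ∫⁻ ω, f ω ^ a ∂P ≤ (∫⁻ ω, (f ω ^ a) ^ (b/a) ∂P) ^ (1/(b/a)) := key
      _ = (∫⁻ ω, f ω ^ b ∂P) ^ (a/b) := by
          rw [one_div_div]
          congr 1
          refine lintegral_congr fun ω => ?_
          rw [← ENNReal.rpow_mul, mul_div_cancel₀ _ ha.ne']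

lemma moment_aux {Ω : Type*} [MeasurableSpace Ω] (P : Measure Ω)
    [IsProbabilityMeasure P] (Z : Ω → ℝ) (hZmeas : Measurable Z) (hZpos : ∀ ω, 0 ≤ Z ω)
    (m : ℕ) (hm : 1 ≤ m) (M : ℝ) (hM : 0 < M)
    (hmoments : ∀ p : ℕ, 2 ≤ p → Even p →
      ∫⁻ ω, ENNReal.ofReal (Z ω ^ p) ∂P ≤
        ENNReal.ofReal ((((p : ℝ) - 1) ^ m * M) ^ p)) (n : ℕ) :
    ∫⁻ ω, ENNReal.ofReal (Z ω) ^ ((n:ℝ)/(m:ℝ)) ∂P ≤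
      ENNReal.ofReal (((n:ℝ) + 1) ^ n * M ^ ((n:ℝ)/(m:ℝ))) := by
  rcases Nat.eq_zero_or_pos n with rfl | hn
  · simp
  obtain ⟨p, hp2, hpe, hnp, hpn⟩ : ∃ p, 2 ≤ p ∧ Even p ∧ n ≤ m * p ∧ p ≤ n + 2 := by
    rcases Nat.even_or_odd n with he | ho
    · exact ⟨n + 2, by omega, he.add even_two, le_trans (by omega)
        (Nat.le_mul_of_pos_left _ hm), le_refl _⟩
    · exact ⟨n + 1, by omega, ho.add_one, le_trans (by omega)
        (Nat.le_mul_of_pos_left _ hm), by omega⟩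
  have hm0 : (0:ℝ) < (m:ℝ) := by exact_mod_cast hm
  have hp0 : (0:ℝ) < (p:ℝ) := by exact_mod_cast (by omega : 0 < p)
  have hp1 : (0:ℝ) ≤ (p:ℝ) - 1 := by
    have : (2:ℝ) ≤ (p:ℝ) := by exact_mod_cast hp2
    linarith
  have ha : (0:ℝ) < (n:ℝ)/(m:ℝ) := by
    apply div_pos _ hm0
    exact_mod_cast hn
  have hab : (n:ℝ)/(m:ℝ) ≤ (p:ℝ) := by
    rw [div_le_iff₀ hm0]
    calc (n:ℝ) ≤ (m*p : ℕ) := by exact_mod_cast hnp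
      _ = (p:ℝ) * (m:ℝ) := by push_cast; ring
  have hX : (0:ℝ) < ((p:ℝ) - 1) ^ m * M := by
    apply mul_pos _ hM
    apply pow_pos
    have : (2:ℝ) ≤ (p:ℝ) := by exact_mod_cast hp2
    linarith
  have hmom' : ∫⁻ ω, ENNReal.ofReal (Z ω) ^ ((p:ℕ):ℝ) ∂P ≤
      ENNReal.ofReal ((((p : ℝ) - 1) ^ m * M) ^ p) := by
    have : ∀ ω, ENNReal.ofReal (Z ω) ^ ((p:ℕ):ℝ) = ENNReal.ofReal (Z ω ^ p) := fun ω => by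
      rw [ENNReal.rpow_natCast, ← ENNReal.ofReal_pow (hZpos ω)]
    rw [lintegral_congr this]
    exact hmoments p hp2 hpe
  have e1 : ((((p:ℝ)-1)^m * M)^p : ℝ) ^ (((n:ℝ)/(m:ℝ))/(p:ℝ)) =
      (((p:ℝ)-1)^m * M) ^ ((n:ℝ)/(m:ℝ)) := by
    rw [← Real.rpow_natCast ((((p:ℝ)-1)^m * M)) p, ← Real.rpow_mul hX.le]
    congr 1
    field_simp
  have e2 : (((p:ℝ)-1)^m * M) ^ ((n:ℝ)/(m:ℝ)) ≤ ((n:ℝ) + 1) ^ n * M ^ ((n:ℝ)/(m:ℝ)) := by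
    rw [Real.mul_rpow (by positivity) hM.le]
    apply mul_le_mul_of_nonneg_right _ (Real.rpow_nonneg hM.le _)
    have e3 : (((p:ℝ)-1)^m : ℝ) ^ ((n:ℝ)/(m:ℝ)) = ((p:ℝ)-1) ^ n := by
      rw [← Real.rpow_natCast ((p:ℝ)-1) m, ← Real.rpow_mul hp1,
        mul_div_cancel₀ _ hm0.ne', Real.rpow_natCast]
    rw [e3]
    apply pow_le_pow_left₀ hp1
    have : (p:ℝ) ≤ (n:ℝ) + 2 := by exact_mod_cast hpn
    linarith
  calc ∫⁻ ω, ENNReal.ofReal (Z ω) ^ ((n:ℝ)/(m:ℝ)) ∂P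
      ≤ (∫⁻ ω, ENNReal.ofReal (Z ω) ^ ((p:ℕ):ℝ) ∂P) ^ (((n:ℝ)/(m:ℝ))/(p:ℝ)) :=
        lyapunov_aux P (ENNReal.measurable_ofReal.comp hZmeas) ha hab
    _ ≤ (ENNReal.ofReal ((((p : ℝ) - 1) ^ m * M) ^ p)) ^ (((n:ℝ)/(m:ℝ))/(p:ℝ)) :=
        ENNReal.rpow_le_rpow hmom' (by positivity)
    _ = ENNReal.ofReal (((((p : ℝ) - 1) ^ m * M) ^ p) ^ (((n:ℝ)/(m:ℝ))/(p:ℝ))) :=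
        ENNReal.ofReal_rpow_of_pos (by positivity)
    _ ≤ ENNReal.ofReal (((n:ℝ) + 1) ^ n * M ^ ((n:ℝ)/(m:ℝ))) := by
        apply ENNReal.ofReal_le_ofReal
        rw [e1]
        exact e2


lemma fact_aux (n : ℕ) : ((n : ℝ) + 1) ^ n ≤ (n.factorial : ℝ) * Real.exp 1 ^ n := by
  induction n with
  | zero => simp
  | succ n ih =>
    have hn1 : (0:ℝ) < (n:ℝ) + 1 := by positivity
    have h1 : (1 : ℝ) + 1/((n:ℝ)+1) ≤ Real.exp (1/((n:ℝ)+1)) := by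
      have := Real.add_one_le_exp (1/((n:ℝ)+1)); linarith
    have h2 : ((1:ℝ) + 1/((n:ℝ)+1)) ^ (n+1) ≤ Real.exp (1/((n:ℝ)+1)) ^ (n+1) :=
      pow_le_pow_left₀ (by positivity) h1 _
    have h3 : Real.exp (1/((n:ℝ)+1)) ^ (n+1) = Real.exp 1 := by
      rw [← Real.exp_nat_mul]
      congr 1
      push_cast
      rw [mul_one_div, div_self (by positivity)]
    have h4 : ((n:ℝ) + 2) ^ (n+1) = ((n:ℝ)+1) ^ (n+1) * ((1:ℝ) + 1/((n:ℝ)+1)) ^ (n+1) := by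
      rw [← mul_pow]
      congr 1
      field_simp
      ring
    have h5 : ((n:ℝ) + 2) ^ (n+1) ≤ ((n:ℝ)+1) ^ (n+1) * Real.exp 1 := by
      rw [h4]
      exact mul_le_mul_of_nonneg_left (h3 ▸ h2) (by positivity)
    have h7 : ((n:ℝ)+1) * ((n:ℝ)+1)^n * Real.exp 1 ≤
        ((n:ℝ)+1) * ((n.factorial : ℝ) * Real.exp 1 ^ n) * Real.exp 1 :=
      mul_le_mul_of_nonneg_right (mul_le_mul_of_nonneg_left ih hn1.le) (Real.exp_pos 1).le
    have hfin : (↑(n + 1) + 1 : ℝ) ^ (n+1) ≤ ((n+1).factorial : ℝ) * Real.exp 1 ^ (n+1) := by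
      push_cast
      calc ((n:ℝ) + 1 + 1) ^ (n+1) = ((n:ℝ) + 2) ^ (n+1) := by ring
        _ ≤ ((n:ℝ)+1) ^ (n+1) * Real.exp 1 := h5
        _ = ((n:ℝ)+1) * ((n:ℝ)+1)^n * Real.exp 1 := by ring
        _ ≤ ((n:ℝ)+1) * ((n.factorial : ℝ) * Real.exp 1 ^ n) * Real.exp 1 := h7
        _ = (((n:ℝ)+1) * (n.factorial : ℝ)) * Real.exp 1 ^ (n+1) := by ring
        _ = ((n+1).factorial : ℝ) * Real.exp 1 ^ (n+1) := by
            rw [Nat.factorial_succ]; push_cast; ring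
    exact hfin

/-- Exponential moment bound: if `Z ≥ 0` satisfies `E[Z] ≤ M` and
`E[Z^p] ≤ ((p−1)^m·M)^p` for all even integers `p ≥ 2`, then for every `γ ≥ 0` with
`γ·e·M^{1/m} < 1` one has `E[exp(γ·Z^{1/m})] ≤ 1/(1 − γ·e·M^{1/m})`. -/
theorem exp_moment_bound {Ω : Type*} [MeasurableSpace Ω] (P : Measure Ω)
    [IsProbabilityMeasure P] (Z : Ω → ℝ) (hZmeas : Measurable Z) (hZpos : ∀ ω, 0 ≤ Z ω)
    (m : ℕ) (hm : 1 ≤ m) (M : ℝ) (hM : 0 < M)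
    (hmean : ∫⁻ ω, ENNReal.ofReal (Z ω) ∂P ≤ ENNReal.ofReal M)
    (hmoments : ∀ p : ℕ, 2 ≤ p → Even p →
      ∫⁻ ω, ENNReal.ofReal (Z ω ^ p) ∂P ≤
        ENNReal.ofReal ((((p : ℝ) - 1) ^ m * M) ^ p))
    (γ : ℝ) (hγ0 : 0 ≤ γ) (hγ : γ * Real.exp 1 * M ^ (1 / (m : ℝ)) < 1) :
    ∫⁻ ω, ENNReal.ofReal (Real.exp (γ * Z ω ^ (1 / (m : ℝ)))) ∂P ≤
      ENNReal.ofReal (1 / (1 - γ * Real.exp 1 * M ^ (1 / (m : ℝ)))) := by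
  have hm0 : (0:ℝ) < (m:ℝ) := by exact_mod_cast hm
  set q : ℝ := γ * Real.exp 1 * M ^ (1 / (m : ℝ)) with hqdef
  have hq0 : 0 ≤ q := by
    apply mul_nonneg (mul_nonneg hγ0 (Real.exp_pos 1).le) (Real.rpow_nonneg hM.le _)
  have hq1 : q < 1 := hγ
  have hY : ∀ ω, 0 ≤ Z ω ^ (1/(m:ℝ)) := fun ω => Real.rpow_nonneg (hZpos ω) _
  have hMpow : ∀ k : ℕ, (M ^ (1/(m:ℝ)))^k = M ^ ((k:ℝ)/(m:ℝ)) := by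
    intro k
    rw [← Real.rpow_natCast (M ^ (1/(m:ℝ))) k, ← Real.rpow_mul hM.le]
    congr 1
    field_simp
  have hpt : ∀ ω, ENNReal.ofReal (Real.exp (γ * Z ω ^ (1 / (m : ℝ)))) =
      ∑' k : ℕ, ENNReal.ofReal ((γ * Z ω ^ (1/(m:ℝ)))^k / k.factorial) := by
    intro ω
    rw [Real.exp_eq_exp_ℝ, NormedSpace.exp_eq_tsum_div]
    exact ENNReal.ofReal_tsum_of_nonneg
      (fun k => div_nonneg (pow_nonneg (mul_nonneg hγ0 (hY ω)) k) (by positivity))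
      (Real.summable_pow_div_factorial _)
  have hmeasK : ∀ k : ℕ, Measurable fun ω =>
      ENNReal.ofReal ((γ * Z ω ^ (1/(m:ℝ)))^k / k.factorial) := by
    intro k
    apply ENNReal.measurable_ofReal.comp
    exact (((hZmeas.pow measurable_const).const_mul γ).pow_const k).div_const _
  have term_bound : ∀ k : ℕ,
      ∫⁻ ω, ENNReal.ofReal ((γ * Z ω ^ (1/(m:ℝ)))^k / k.factorial) ∂P ≤
        (ENNReal.ofReal q)^k := by
    intro k
    have hfk : (0:ℝ) < k.factorial := by exact_mod_cast k.factorial_pos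
    have hsplit : ∀ ω, ENNReal.ofReal ((γ * Z ω ^ (1/(m:ℝ)))^k / k.factorial) =
        ENNReal.ofReal (γ^k / k.factorial) * (ENNReal.ofReal (Z ω)) ^ ((k:ℝ)/(m:ℝ)) := by
      intro ω
      have hz : (Z ω ^ (1/(m:ℝ)))^k = Z ω ^ ((k:ℝ)/(m:ℝ)) := by
        rw [← Real.rpow_natCast (Z ω ^ (1/(m:ℝ))) k, ← Real.rpow_mul (hZpos ω)]
        congr 1
        field_simp
      have h1 : (γ * Z ω ^ (1/(m:ℝ)))^k / k.factorial
          = γ^k / k.factorial * (Z ω ^ ((k:ℝ)/(m:ℝ))) := by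
        rw [mul_pow, hz]; ring
      rw [h1, ENNReal.ofReal_mul (by positivity),
        ← ENNReal.ofReal_rpow_of_nonneg (hZpos ω) (by positivity)]
    have key : ((k:ℝ)+1)^k / k.factorial ≤ Real.exp 1 ^ k := by
      rw [div_le_iff₀ hfk, mul_comm]
      exact fact_aux k
    have real_step : γ^k / k.factorial * (((k:ℝ)+1)^k * M ^ ((k:ℝ)/(m:ℝ))) ≤ q^k := by
      calc γ^k / k.factorial * (((k:ℝ)+1)^k * M ^ ((k:ℝ)/(m:ℝ)))
          = (γ^k * M ^ ((k:ℝ)/(m:ℝ))) * (((k:ℝ)+1)^k / k.factorial) := by ring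
        _ ≤ (γ^k * M ^ ((k:ℝ)/(m:ℝ))) * Real.exp 1 ^ k := by
            apply mul_le_mul_of_nonneg_left key
            exact mul_nonneg (pow_nonneg hγ0 k) (Real.rpow_nonneg hM.le _)
        _ = q^k := by rw [hqdef, mul_pow, mul_pow, hMpow k]; ring
    calc ∫⁻ ω, ENNReal.ofReal ((γ * Z ω ^ (1/(m:ℝ)))^k / k.factorial) ∂P
        = ENNReal.ofReal (γ^k / k.factorial) *
            ∫⁻ ω, (ENNReal.ofReal (Z ω)) ^ ((k:ℝ)/(m:ℝ)) ∂P := by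
          have hFm : Measurable fun ω => ENNReal.ofReal (Z ω) ^ ((k:ℝ)/(m:ℝ)) :=
            (ENNReal.measurable_ofReal.comp hZmeas).pow measurable_const
          rw [lintegral_congr hsplit, lintegral_const_mul _ hFm]
      _ ≤ ENNReal.ofReal (γ^k / k.factorial) *
            ENNReal.ofReal (((k:ℝ)+1)^k * M ^ ((k:ℝ)/(m:ℝ))) :=
          mul_le_mul_right (moment_aux P Z hZmeas hZpos m hm M hM hmoments k) _
      _ = ENNReal.ofReal (γ^k / k.factorial * (((k:ℝ)+1)^k * M ^ ((k:ℝ)/(m:ℝ)))) :=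
          (ENNReal.ofReal_mul (by positivity)).symm
      _ ≤ ENNReal.ofReal (q^k) := ENNReal.ofReal_le_ofReal real_step
      _ = (ENNReal.ofReal q)^k := ENNReal.ofReal_pow hq0 k
  calc ∫⁻ ω, ENNReal.ofReal (Real.exp (γ * Z ω ^ (1 / (m : ℝ)))) ∂P
      = ∑' k : ℕ, ∫⁻ ω, ENNReal.ofReal ((γ * Z ω ^ (1/(m:ℝ)))^k / k.factorial) ∂P := by
        rw [lintegral_congr hpt, lintegral_tsum (fun k => (hmeasK k).aemeasurable)]
    _ ≤ ∑' k : ℕ, (ENNReal.ofReal q)^k := ENNReal.tsum_le_tsum term_bound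
    _ = (1 - ENNReal.ofReal q)⁻¹ := ENNReal.tsum_geometric _
    _ = ENNReal.ofReal (1/(1-q)) := by
        have h1 : (1 : ℝ≥0∞) - ENNReal.ofReal q = ENNReal.ofReal (1 - q) := by
          rw [ENNReal.ofReal_sub 1 hq0, ENNReal.ofReal_one]
        rw [h1, ← ENNReal.ofReal_inv_of_pos (by linarith), one_div]
end

section
/- Let (Ω, 𝓕, P) be a probability space with a filtration (𝓕_t)_{t ∈ [a, b]} on a compact interval [a, b] ⊂ ℝ, and let Y = (Y_t)_{t ∈ [a, b]} be a nonnegative submartingale whose sample paths are continuous. Then for every integer m ≥ 1, every γ > 0 and every c > 0, P( sup_{t ∈ [a, b]} Y_t > c ) ≤ ( e^{m−1} + E[exp(γ · Y_b^{1/m})] ) · exp(−γ · c^{1/m}), where the expectation is taken in [0, ∞]. -/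
open MeasureTheory

/-- Bernoulli-type inequality from convexity of `exp`. -/
lemma exp_mul_le (θ y : ℝ) (h0 : 0 ≤ θ) (h1 : θ ≤ 1) :
    Real.exp (θ * y) ≤ 1 + θ * (Real.exp y - 1) := by
  have h := convexOn_exp.2 (Set.mem_univ y) (Set.mem_univ (0:ℝ)) h0
    (show (0:ℝ) ≤ 1 - θ by linarith) (show θ + (1 - θ) = 1 by ring)
  simp only [smul_eq_mul, mul_zero, add_zero, Real.exp_zero, mul_one] at h
  linarith

/-- There is a line `α x + β` lying below `e^{m-1} + exp (γ x^{1/m})` on `[0, ∞)` and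
above `exp (γ c^{1/m})` at `c`. -/
lemma doob_line_exists (m : ℕ) (hm : 1 ≤ m) (γ c : ℝ) (hγ : 0 < γ) (hc : 0 < c) :
    ∃ α β : ℝ, 0 ≤ α ∧ Real.exp (γ * c ^ (1 / (m:ℝ))) ≤ α * c + β ∧
      ∀ x : ℝ, 0 ≤ x → α * x + β ≤ Real.exp ((m:ℝ) - 1) + Real.exp (γ * x ^ (1 / (m:ℝ))) := by
  obtain ⟨k, rfl⟩ : ∃ k, m = k + 1 := ⟨m - 1, (Nat.succ_pred_eq_of_pos hm).symm⟩
  set m := k + 1 with hmdef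
  have hM : (1:ℝ) ≤ (m:ℝ) := by exact_mod_cast hm
  have hM0 : (0:ℝ) < (m:ℝ) := by positivity
  set t := c ^ (1 / (m:ℝ)) with htdef
  have ht : 0 < t := Real.rpow_pos_of_pos hc _
  have htm : t ^ m = c := by
    rw [htdef, ← Real.rpow_natCast (c ^ (1/(m:ℝ))) m, ← Real.rpow_mul hc.le]
    rw [one_div, inv_mul_cancel₀ (by positivity), Real.rpow_one]
  set v := γ * t with hvdef
  have hv0 : 0 < v := mul_pos hγ ht
  by_cases hv1 : v ≤ (m:ℝ) - 1
  · refine ⟨0, Real.exp v, le_refl 0, by simp, fun x hx => ?_⟩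
    have h1 := Real.exp_le_exp.mpr hv1
    have h2 := (Real.exp_pos (γ * x ^ (1/(m:ℝ)))).le
    nlinarith
  push_neg at hv1
  refine ⟨v * Real.exp v / ((m:ℝ) * c), Real.exp v - v * Real.exp v / (m:ℝ), by positivity,
    le_of_eq (by field_simp; ring), ?_⟩
  intro x hx
  set s := x ^ (1 / (m:ℝ)) with hsdef
  have hs0 : 0 ≤ s := Real.rpow_nonneg hx _
  have hsm : s ^ m = x := by
    rw [hsdef, ← Real.rpow_natCast (x ^ (1/(m:ℝ))) m, ← Real.rpow_mul hx]
    rw [one_div, inv_mul_cancel₀ (by positivity), Real.rpow_one]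
  rw [← hsm]
  have hexpnn : (0:ℝ) < Real.exp ((m:ℝ) - 1) := Real.exp_pos _
  by_cases hvM : v ≤ (m:ℝ)
  · -- case m - 1 < v ≤ m
    have h1 : s ≤ (m:ℝ)/γ * Real.exp (γ*s/(m:ℝ) - 1) := by
      have h := Real.add_one_le_exp (γ*s/(m:ℝ) - 1)
      have h' : γ*s/(m:ℝ) ≤ Real.exp (γ*s/(m:ℝ) - 1) := by linarith
      calc s = (m:ℝ)/γ * (γ*s/(m:ℝ)) := by field_simp
        _ ≤ (m:ℝ)/γ * Real.exp (γ*s/(m:ℝ) - 1) :=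
            mul_le_mul_of_nonneg_left h' (by positivity)
    have hid : (m:ℝ) * (γ*s/(m:ℝ) - 1) = γ*s - (m:ℝ) := by
      field_simp
    have h2 : s ^ m ≤ ((m:ℝ)/γ)^m * Real.exp (γ*s - (m:ℝ)) := by
      have := pow_le_pow_left₀ hs0 h1 m
      rwa [mul_pow, ← Real.exp_nat_mul, hid] at this
    have hαm : v * Real.exp v / ((m:ℝ) * c) * ((m:ℝ)/γ)^m = Real.exp v * ((m:ℝ)/v)^k := by
      rw [hvdef, ← htm, div_pow, div_pow, mul_pow]
      field_simp
      rw [hmdef]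
      push_cast
      ring
    have hiii : ((m:ℝ)/v)^k ≤ Real.exp ((m:ℝ) - v) := by
      have ha : (m:ℝ)/v ≤ Real.exp ((m:ℝ)/v - 1) := by
        have := Real.add_one_le_exp ((m:ℝ)/v - 1); linarith
      have hb : ((m:ℝ)/v)^k ≤ Real.exp ((m:ℝ)/v - 1)^k := pow_le_pow_left₀ (by positivity) ha k
      rw [← Real.exp_nat_mul] at hb
      refine hb.trans (Real.exp_le_exp.mpr ?_)
      have hkR : (k:ℝ) = (m:ℝ) - 1 := by rw [hmdef]; push_cast; ring
      rw [hkR]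
      have he1 : (m:ℝ)/v - 1 = ((m:ℝ) - v)/v := by field_simp
      rw [he1, ← mul_div_assoc, div_le_iff₀ hv0]
      nlinarith [sub_nonneg.mpr hvM]
    have hK : v * Real.exp v / ((m:ℝ) * c) * ((m:ℝ)/γ)^m ≤ Real.exp (m:ℝ) := by
      rw [hαm]
      calc Real.exp v * ((m:ℝ)/v)^k ≤ Real.exp v * Real.exp ((m:ℝ) - v) :=
            mul_le_mul_of_nonneg_left hiii (Real.exp_pos v).le
        _ = Real.exp (m:ℝ) := by rw [← Real.exp_add]; ring_nf
    have hmain : v * Real.exp v / ((m:ℝ) * c) * s ^ m ≤ Real.exp (γ * s) := by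
      calc v * Real.exp v / ((m:ℝ) * c) * s ^ m
          ≤ v * Real.exp v / ((m:ℝ) * c) * (((m:ℝ)/γ)^m * Real.exp (γ*s - (m:ℝ))) :=
            mul_le_mul_of_nonneg_left h2 (by positivity)
        _ = (v * Real.exp v / ((m:ℝ) * c) * ((m:ℝ)/γ)^m) * Real.exp (γ*s - (m:ℝ)) := by ring
        _ ≤ Real.exp (m:ℝ) * Real.exp (γ*s - (m:ℝ)) :=
            mul_le_mul_of_nonneg_right hK (Real.exp_pos _).le
        _ = Real.exp (γ * s) := by rw [← Real.exp_add]; ring_nf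
    have hβ : Real.exp v - v * Real.exp v / (m:ℝ) ≤ Real.exp ((m:ℝ) - 1) := by
      have hw : (m:ℝ) - v ≤ Real.exp ((m:ℝ) - v - 1) := by
        have := Real.add_one_le_exp ((m:ℝ) - v - 1); linarith
      have hwe : Real.exp v * ((m:ℝ) - v) ≤ Real.exp ((m:ℝ) - 1) := by
        calc Real.exp v * ((m:ℝ) - v) ≤ Real.exp v * Real.exp ((m:ℝ) - v - 1) :=
              mul_le_mul_of_nonneg_left hw (Real.exp_pos v).le
          _ = Real.exp ((m:ℝ) - 1) := by rw [← Real.exp_add]; ring_nf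
      have heq : Real.exp v - v * Real.exp v / (m:ℝ) = Real.exp v * ((m:ℝ) - v) / (m:ℝ) := by
        field_simp
      rw [heq]
      calc Real.exp v * ((m:ℝ) - v) / (m:ℝ) ≤ Real.exp ((m:ℝ) - 1) / (m:ℝ) := by gcongr
        _ ≤ Real.exp ((m:ℝ) - 1) := div_le_self hexpnn.le hM
    linarith
  · -- case v > m
    push_neg at hvM
    have h1 : s ≤ t * Real.exp (s/t - 1) := by
      have h := Real.add_one_le_exp (s/t - 1)
      have h' : s/t ≤ Real.exp (s/t - 1) := by linarith
      calc s = t * (s/t) := by field_simp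
        _ ≤ t * Real.exp (s/t - 1) := mul_le_mul_of_nonneg_left h' ht.le
    have hid : (m:ℝ) * (s/t - 1) = (m:ℝ)/v * (γ*s - v) := by
      rw [hvdef]; field_simp
    have h2 : s ^ m ≤ c * Real.exp ((m:ℝ)/v * (γ*s - v)) := by
      have := pow_le_pow_left₀ hs0 h1 m
      rwa [mul_pow, ← Real.exp_nat_mul, htm, hid] at this
    have hbern := exp_mul_le ((m:ℝ)/v) (γ*s - v) (by positivity) (by
      rw [div_le_one hv0]; exact hvM.le)
    have hprod : Real.exp v * (Real.exp (γ*s - v) - 1) = Real.exp (γ*s) - Real.exp v := by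
      rw [mul_sub, ← Real.exp_add, mul_one]; ring_nf
    have hmain : v * Real.exp v / ((m:ℝ) * c) * s ^ m
        ≤ v * Real.exp v / (m:ℝ) + Real.exp v * (Real.exp (γ*s - v) - 1) := by
      calc v * Real.exp v / ((m:ℝ) * c) * s ^ m
          ≤ v * Real.exp v / ((m:ℝ) * c) * (c * Real.exp ((m:ℝ)/v * (γ*s - v))) :=
            mul_le_mul_of_nonneg_left h2 (by positivity)
        _ = v * Real.exp v / (m:ℝ) * Real.exp ((m:ℝ)/v * (γ*s - v)) := by field_simp
        _ ≤ v * Real.exp v / (m:ℝ) * (1 + (m:ℝ)/v * (Real.exp (γ*s - v) - 1)) :=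
            mul_le_mul_of_nonneg_left hbern (by positivity)
        _ = v * Real.exp v / (m:ℝ) + Real.exp v * (Real.exp (γ*s - v) - 1) := by
            field_simp
    linarith [hmain, hprod, hexpnn]
/-- Doob-type inequality: if `Y` is a nonnegative submartingale with continuous sample
paths on a compact interval `[a, b]`, then for every `m ≥ 1`, `γ > 0` and `c > 0`,
`P(sup_{t ∈ [a,b]} Y_t > c) ≤ (e^{m−1} + E[exp(γ·Y_b^{1/m})])·exp(−γ·c^{1/m})`,
the expectation being taken in `[0, ∞]`. -/
theorem doob_exp_root_bound {Ω : Type*} {m0 : MeasurableSpace Ω} (P : Measure Ω)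
    [IsProbabilityMeasure P] (a b : ℝ) (hab : a ≤ b)
    (ℱ : Filtration (Set.Icc a b) m0) (Y : Set.Icc a b → Ω → ℝ)
    (hsub : Submartingale Y ℱ P)
    (hpos : ∀ t ω, 0 ≤ Y t ω)
    (hcont : ∀ ω, Continuous fun t : Set.Icc a b => Y t ω)
    (m : ℕ) (hm : 1 ≤ m) (γ c : ℝ) (hγ : 0 < γ) (hc : 0 < c) :
    P {ω | c < ⨆ t : Set.Icc a b, Y t ω} ≤
      (ENNReal.ofReal (Real.exp ((m : ℝ) - 1)) +
          ∫⁻ ω, ENNReal.ofReal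
            (Real.exp (γ * (Y ⟨b, Set.right_mem_Icc.mpr hab⟩ ω) ^ (1 / (m : ℝ)))) ∂P) *
        ENNReal.ofReal (Real.exp (-γ * c ^ (1 / (m : ℝ)))) := by
  classical
  obtain ⟨α, β, hα, hlc, hline⟩ := doob_line_exists m hm γ c hγ hc
  set b' : Set.Icc a b := ⟨b, Set.right_mem_Icc.mpr hab⟩ with hb'
  haveI : Nonempty (Set.Icc a b) := ⟨b'⟩
  haveI : CompactSpace (Set.Icc a b) := isCompact_iff_compactSpace.mp isCompact_Icc
  set e : ℕ → Set.Icc a b := TopologicalSpace.denseSeq (Set.Icc a b) with he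
  have hde : DenseRange e := TopologicalSpace.denseRange_denseSeq _
  have hYint : ∀ i, Integrable (Y i) P := fun i => hsub.integrable i
  set g : Ω → ℝ := fun ω => α * Y b' ω + β with hg
  have hgint : Integrable g P := ((hYint b').const_mul α).add (integrable_const β)
  set I : ENNReal := ENNReal.ofReal (Real.exp ((m : ℝ) - 1)) +
      ∫⁻ ω, ENNReal.ofReal (Real.exp (γ * (Y b' ω) ^ (1 / (m : ℝ)))) ∂P with hI
  set S : ℕ → Set Ω := fun n => {ω | c < Y (e n) ω} with hS
  have hSmeas' : ∀ n, MeasurableSet[ℱ (e n)] (S n) := fun n =>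
    (hsub.stronglyAdapted (e n)).measurable measurableSet_Ioi
  have hSmeas : ∀ n, MeasurableSet (S n) := fun n => ℱ.le _ _ (hSmeas' n)
  set A : ℕ → Set Ω := fun N => ⋃ n ∈ Finset.range (N+1), S n with hA
  have hAmeas : ∀ N, MeasurableSet (A N) :=
    fun N => (Finset.range (N+1)).measurableSet_biUnion (fun n _ => hSmeas n)
  have hAmono : Monotone A := fun N M hNM =>
    Set.biUnion_subset_biUnion_left (Finset.coe_subset.mpr (Finset.range_subset_range.mpr (by omega)))
  -- Step 1 : event identification
  have hev : {ω | c < ⨆ t : Set.Icc a b, Y t ω} = ⋃ N, A N := by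
    ext ω
    have hbdd : BddAbove (Set.range fun t => Y t ω) := (isCompact_range (hcont ω)).bddAbove
    simp only [hA, Set.mem_setOf_eq, Set.mem_iUnion, Finset.mem_range]
    constructor
    · intro h
      have hex : ∃ t0, c < Y t0 ω := by
        by_contra h'
        push_neg at h'
        exact absurd (ciSup_le h') (not_le.mpr h)
      obtain ⟨t0, ht0⟩ := hex
      have hopen : IsOpen {t : Set.Icc a b | c < Y t ω} :=
        isOpen_lt continuous_const (hcont ω)
      obtain ⟨n, hn⟩ := hde.exists_mem_open hopen ⟨t0, ht0⟩
      exact ⟨n, n, Nat.lt_succ_self n, hn⟩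
    · rintro ⟨N, n, -, hn⟩
      exact lt_of_lt_of_le hn (le_ciSup hbdd (e n))
  -- Step 2 : per-stage maximal inequality
  have key : ∀ N, P (A N) * ENNReal.ofReal (Real.exp (γ * c ^ (1 / (m:ℝ)))) ≤ I := by
    intro N
    set R : ℕ → ℕ → Prop := fun i j =>
      ((e i : ℝ) < (e j : ℝ) ∨ ((e i : ℝ) = (e j : ℝ) ∧ i < j)) with hR
    have hRle : ∀ {i j}, R i j → e i ≤ e j := by
      intro i j hij
      rcases hij with h | ⟨h, _⟩
      · exact le_of_lt (Subtype.coe_lt_coe.mp h)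
      · exact le_of_eq (Subtype.coe_injective h)
    have hRtot : ∀ i j : ℕ, i ≠ j → R i j ∨ R j i := by
      intro i j hij
      rcases lt_trichotomy ((e i : ℝ)) ((e j : ℝ)) with h | h | h
      · exact Or.inl (Or.inl h)
      · rcases lt_or_gt_of_ne hij with h' | h'
        · exact Or.inl (Or.inr ⟨h, h'⟩)
        · exact Or.inr (Or.inr ⟨h.symm, h'⟩)
      · exact Or.inr (Or.inl h)
    set B : ℕ → Set Ω := fun n =>
      S n ∩ {ω | ∀ k, k ≤ N → R k n → Y (e k) ω ≤ c} with hB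
    have hBmeas' : ∀ n, MeasurableSet[ℱ (e n)] (B n) := by
      intro n
      refine (hSmeas' n).inter ?_
      have heq : {ω | ∀ k, k ≤ N → R k n → Y (e k) ω ≤ c}
          = ⋂ (k) (_ : k ≤ N) (_ : R k n), {ω | Y (e k) ω ≤ c} := by
        ext ω; simp [Set.mem_iInter]
      rw [heq]
      refine MeasurableSet.iInter fun k => MeasurableSet.iInter fun _ =>
        MeasurableSet.iInter fun hrel => ?_
      exact ℱ.mono (hRle hrel) _ ((hsub.stronglyAdapted (e k)).measurable measurableSet_Iic)
    have hBmeas : ∀ n, MeasurableSet (B n) := fun n => ℱ.le _ _ (hBmeas' n)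
    have hBdisj : (↑(Finset.range (N+1)) : Set ℕ).PairwiseDisjoint B := by
      intro i hi j hj hij
      simp only [Finset.coe_range, Set.mem_Iio] at hi hj
      apply Set.disjoint_left.mpr
      intro ω hωi hωj
      rcases hRtot i j hij with h | h
      · exact absurd (hωj.2 i (by omega) h) (not_le.mpr hωi.1)
      · exact absurd (hωi.2 j (by omega) h) (not_le.mpr hωj.1)
    have hBU : ⋃ n ∈ Finset.range (N+1), B n = A N := by
      apply Set.Subset.antisymm
      · exact Set.iUnion₂_mono fun n _ => Set.inter_subset_left
      · intro ω hω
        simp only [hA, Set.mem_iUnion, Finset.mem_range] at hω ⊢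
        obtain ⟨n0, hn0, hωn0⟩ := hω
        set T := (Finset.range (N+1)).filter (fun n => c < Y (e n) ω) with hT
        have hTne : T.Nonempty := ⟨n0, Finset.mem_filter.mpr ⟨Finset.mem_range.mpr hn0, hωn0⟩⟩
        obtain ⟨n, hnT, hmin⟩ := T.exists_min_image (fun n => toLex ((e n : ℝ), n)) hTne
        obtain ⟨hnN, hYn⟩ := Finset.mem_filter.mp hnT
        refine ⟨n, Finset.mem_range.mp hnN, hYn, ?_⟩
        intro j hj hrel
        by_contra hYj
        push_neg at hYj
        have hjT : j ∈ T := Finset.mem_filter.mpr ⟨Finset.mem_range.mpr (by omega), hYj⟩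
        have hle := hmin j hjT
        have hlt : toLex ((e j : ℝ), j) < toLex ((e n : ℝ), n) := by
          rw [Prod.Lex.lt_iff]
          exact hrel
        exact absurd hle (not_le.mpr hlt)
    have hpiece : ∀ n ∈ Finset.range (N+1),
        Real.exp (γ * c ^ (1 / (m:ℝ))) * (P (B n)).toReal ≤ ∫ ω in B n, g ω ∂P := by
      intro n _
      have hint1 : IntegrableOn (fun ω => α * Y (e n) ω + β) (B n) P :=
        (((hYint (e n)).const_mul α).add (integrable_const β)).integrableOn
      have hint2 : IntegrableOn g (B n) P := hgint.integrableOn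
      have hconst : IntegrableOn (fun _ : Ω => α * c + β) (B n) P :=
        (integrable_const _).integrableOn
      have hstep1 : Real.exp (γ * c ^ (1 / (m:ℝ))) * (P (B n)).toReal
          ≤ ∫ ω in B n, (α * c + β) ∂P := by
        rw [setIntegral_const, smul_eq_mul, measureReal_def]
        apply mul_le_mul_of_nonneg_right hlc ENNReal.toReal_nonneg |>.trans_eq
        ring
      have hstep2 : ∫ ω in B n, (α * c + β) ∂P ≤ ∫ ω in B n, (α * Y (e n) ω + β) ∂P := by
        refine setIntegral_mono_on hconst hint1 (hBmeas n) ?_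
        intro ω hω
        have : c ≤ Y (e n) ω := le_of_lt hω.1
        have := mul_le_mul_of_nonneg_left this hα
        linarith
      have hstep3 : ∫ ω in B n, (α * Y (e n) ω + β) ∂P ≤ ∫ ω in B n, g ω ∂P := by
        have hexp : ∀ i : Set.Icc a b, ∫ ω in B n, (α * Y i ω + β) ∂P
            = α * ∫ ω in B n, Y i ω ∂P + β * (P (B n)).toReal := by
          intro i
          rw [integral_add (((hYint i).integrableOn).const_mul α)
            ((integrable_const β).integrableOn), integral_const_mul, setIntegral_const,
            smul_eq_mul, measureReal_def]
          ring
        have hen_le : e n ≤ b' := by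
          have := (e n).2.2
          exact Subtype.coe_le_coe.mp (show (e n : ℝ) ≤ (b' : ℝ) from this)
        have hYle := hsub.setIntegral_le hen_le (hBmeas' n)
        have := mul_le_mul_of_nonneg_left hYle hα
        rw [hexp (e n), show ∫ ω in B n, g ω ∂P = α * ∫ ω in B n, Y b' ω ∂P
          + β * (P (B n)).toReal from hexp b']
        linarith
      linarith
    have hsum : Real.exp (γ * c ^ (1 / (m:ℝ))) * (P (A N)).toReal ≤ ∫ ω in A N, g ω ∂P := by
      rw [← hBU, measure_biUnion_finset hBdisj (fun n _ => hBmeas n),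
        integral_biUnion_finset _ (fun n _ => hBmeas n) hBdisj (fun n _ => hgint.integrableOn)]
      rw [ENNReal.toReal_sum (fun n _ => measure_ne_top P _), Finset.mul_sum]
      exact Finset.sum_le_sum hpiece
    calc P (A N) * ENNReal.ofReal (Real.exp (γ * c ^ (1 / (m:ℝ))))
        = ENNReal.ofReal ((P (A N)).toReal * Real.exp (γ * c ^ (1 / (m:ℝ)))) := by
          rw [ENNReal.ofReal_mul ENNReal.toReal_nonneg, ENNReal.ofReal_toReal (measure_ne_top P _)]
      _ ≤ ENNReal.ofReal (∫ ω in A N, g ω ∂P) :=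
          ENNReal.ofReal_le_ofReal (by rw [mul_comm]; exact hsum)
      _ ≤ ENNReal.ofReal (∫ ω in A N, max (g ω) 0 ∂P) := by
          apply ENNReal.ofReal_le_ofReal
          exact integral_mono hgint.integrableOn hgint.pos_part.integrableOn
            (fun ω => le_max_left _ _)
      _ = ∫⁻ ω in A N, ENNReal.ofReal (max (g ω) 0) ∂P := by
          rw [ofReal_integral_eq_lintegral_ofReal hgint.pos_part.integrableOn
            (Filter.Eventually.of_forall fun ω => le_max_right _ _)]
      _ ≤ ∫⁻ ω, ENNReal.ofReal (max (g ω) 0) ∂P := setLIntegral_le_lintegral _ _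
      _ ≤ ∫⁻ ω, (ENNReal.ofReal (Real.exp ((m:ℝ) - 1)) +
            ENNReal.ofReal (Real.exp (γ * (Y b' ω) ^ (1 / (m:ℝ))))) ∂P := by
          apply lintegral_mono
          intro ω
          have hb := hline (Y b' ω) (hpos b' ω)
          have hmax : max (g ω) 0 ≤ Real.exp ((m:ℝ) - 1) +
              Real.exp (γ * (Y b' ω) ^ (1 / (m:ℝ))) := max_le hb (by positivity)
          exact le_trans (ENNReal.ofReal_le_ofReal hmax) ENNReal.ofReal_add_le
      _ = I := by
          rw [lintegral_add_left measurable_const, lintegral_const, measure_univ, mul_one, hI]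
  -- Step 3 : conclusion
  rw [hev, Directed.measure_iUnion hAmono.directed_le]
  have hIs : (⨆ N, P (A N)) * ENNReal.ofReal (Real.exp (γ * c ^ (1 / (m:ℝ)))) ≤ I := by
    rw [ENNReal.iSup_mul]
    exact iSup_le key
  have hone : ENNReal.ofReal (Real.exp (γ * c ^ (1 / (m:ℝ))))
      * ENNReal.ofReal (Real.exp (-γ * c ^ (1 / (m:ℝ)))) = 1 := by
    rw [← ENNReal.ofReal_mul (Real.exp_nonneg _), ← Real.exp_add]
    norm_num
  calc (⨆ N, P (A N)) = (⨆ N, P (A N)) * 1 := (mul_one _).symm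
    _ = ((⨆ N, P (A N)) * ENNReal.ofReal (Real.exp (γ * c ^ (1 / (m:ℝ)))))
        * ENNReal.ofReal (Real.exp (-γ * c ^ (1 / (m:ℝ)))) := by
        rw [mul_assoc, hone]
    _ ≤ I * ENNReal.ofReal (Real.exp (-γ * c ^ (1 / (m:ℝ)))) := mul_le_mul_left hIs _
end
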